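/- arXiv:2112.11770 — 8 statements merged into one kernel-verified Lean document; each statement's English description precedes it below -/
import Mathlib

section
/- Assume char k = 0. Let t, a ∈ k with (t,a) ≠ (0,0), let A be the symmetric matrix of the quadratic form x² + txy + ay² − yz (so C_A : x² + txy + ay² − yz = 0) and B the symmetric matrix of x² − yz (so C_B : x² − yz = 0); these are smooth conics which intersect at [0:0:1] with multiplicity at least 3 (they are osculating). Then there is no Poncelet sequence (c,d) for (A,B) with [c₁] ≠ [0:0:1] that stops after n steps for some positive integer n. -/
open Matrix

private lemma bilinA {k : Type*} [Field k] (t a : k) (x y : Fin 3 → k) :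
    x ⬝ᵥ (!![1, t / 2, 0; t / 2, a, -(1 / 2); 0, -(1 / 2), 0]).mulVec y
      = x 0 * y 0 + t / 2 * (x 0 * y 1) + t / 2 * (x 1 * y 0) + a * (x 1 * y 1)
        - x 1 * y 2 / 2 - x 2 * y 1 / 2 := by
  simp [Matrix.mulVec, dotProduct, Fin.sum_univ_three, Matrix.vecHead, Matrix.vecTail]
  ring

private lemma bilinB {k : Type*} [Field k] (x y : Fin 3 → k) :
    x ⬝ᵥ (!![1, 0, 0; 0, 0, -(1 / 2); 0, -(1 / 2), 0]).mulVec y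
      = x 0 * y 0 - x 1 * y 2 / 2 - x 2 * y 1 / 2 := by
  simp [Matrix.mulVec, dotProduct, Fin.sum_univ_three, Matrix.vecHead, Matrix.vecTail]
  ring

/-- if a vector lies on the conic `B` and the tangent line at it passes through a point with
nonzero second coordinate, its second coordinate is nonzero. -/
private lemma d_second_ne {k : Type*} [Field k] [CharZero k] (C D : Fin 3 → k) (hCy : C 1 ≠ 0) (hDne : D ≠ 0)
    (hqB : D 0 * D 0 - D 1 * D 2 / 2 - D 2 * D 1 / 2 = 0)
    (hbil : C 0 * D 0 - C 1 * D 2 / 2 - C 2 * D 1 / 2 = 0) : D 1 ≠ 0 := by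
  intro h
  have h0 : D 0 = 0 := by
    have h2 : D 0 ^ 2 = 0 := by linear_combination hqB + D 2 * h
    exact pow_eq_zero_iff (by norm_num) |>.mp h2
  have h2 : D 2 = 0 := by
    have hh : C 1 * D 2 = 0 := by linear_combination (-2) * hbil + 2 * C 0 * h0 - C 2 * h
    exact (mul_eq_zero.mp hh).resolve_left hCy
  exact hDne (funext fun j => by fin_cases j <;> simp [h0, h, h2])


/-- A Poncelet sequence for the pair of conics defined by symmetric matrices `A` and `B`. -/
def PonceletSeq {k : Type*} [Field k] (A B : Matrix (Fin 3) (Fin 3) k)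
    (c d : ℕ → Fin 3 → k) : Prop :=
  ∀ i, 1 ≤ i →
    c i ≠ 0 ∧ d i ≠ 0 ∧
    c i ⬝ᵥ A.mulVec (c i) = 0 ∧
    d i ⬝ᵥ B.mulVec (d i) = 0 ∧
    c i ⬝ᵥ B.mulVec (d i) = 0 ∧
    c (i + 1) ⬝ᵥ B.mulVec (d i) = 0 ∧
    (∀ x : Fin 3 → k, x ≠ 0 → x ⬝ᵥ A.mulVec x = 0 → x ⬝ᵥ B.mulVec (d i) = 0 →
      (∃ s : k, x = s • c i) ∨ (∃ s : k, x = s • c (i + 1))) ∧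
    c (i + 1) ⬝ᵥ B.mulVec (d (i + 1)) = 0 ∧
    (∀ y : Fin 3 → k, y ≠ 0 → y ⬝ᵥ B.mulVec y = 0 → c (i + 1) ⬝ᵥ B.mulVec y = 0 →
      (∃ s : k, y = s • d i) ∨ (∃ s : k, y = s • d (i + 1)))

/-- The Poncelet sequence `(c, d)` stops after `n` steps. -/
def PonceletStops {k : Type*} [Field k] (c d : ℕ → Fin 3 → k) (n : ℕ) : Prop :=
  (∃ s : k, c (n + 1) = s • c 1) ∧ (∃ s : k, d (n + 1) = s • d 1)

/-- **Poncelet's theorem for osculating conics in characteristic 0.**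
For the osculating conics `C_A : x² + txy + ay² − yz = 0` and `C_B : x² − yz = 0` over an
algebraically closed field of characteristic `0`, no Poncelet sequence starting at a point
other than the tangency point `[0:0:1]` ever stops. -/
theorem poncelet_osculating_char_zero {k : Type*} [Field k] [IsAlgClosed k] [CharZero k]
    (t a : k) (hta : (t, a) ≠ (0, 0)) :
    ∀ c d : ℕ → Fin 3 → k,
      PonceletSeq (!![1, t / 2, 0; t / 2, a, -(1 / 2); 0, -(1 / 2), 0])
        (!![1, 0, 0; 0, 0, -(1 / 2); 0, -(1 / 2), 0]) c d →
      (¬ ∃ s : k, c 1 = s • ![0, 0, 1]) →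
      ∀ n : ℕ, 0 < n → ¬ PonceletStops c d n := by
  intro c d hP hc1 n hn hstop
  -- Step 1: all second coordinates are nonzero
  have key : ∀ i, 1 ≤ i → c i 1 ≠ 0 ∧ d i 1 ≠ 0 := by
    intro i hi
    induction i with
    | zero => omega
    | succ m ih =>
      obtain ⟨hcne, hdne, hqA, hqB, hbil, -, -, -, -⟩ := hP (m + 1) hi
      rw [bilinA] at hqA
      rw [bilinB] at hqB hbil
      have hcy : c (m + 1) 1 ≠ 0 := by
        intro hzero
        have h0 : c (m + 1) 0 = 0 := by
          have h2 : c (m + 1) 0 ^ 2 = 0 := by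
            linear_combination hqA + (c (m + 1) 2 - t * c (m + 1) 0 - a * c (m + 1) 1) * hzero
          exact pow_eq_zero_iff (by norm_num) |>.mp h2
        by_cases hm : m = 0
        · subst hm
          exact hc1 ⟨c 1 2, funext fun j => by fin_cases j <;> simp [h0, hzero]⟩
        · obtain ⟨-, -, -, -, -, hbil6, -, -, -⟩ := hP m (by omega)
          rw [bilinB] at hbil6
          have hdm : d m 1 ≠ 0 := (ih (by omega)).2
          have hh : c (m + 1) 2 * d m 1 = 0 := by
            linear_combination (-2) * hbil6 + 2 * d m 0 * h0 - d m 2 * hzero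
          have h2 : c (m + 1) 2 = 0 := (mul_eq_zero.mp hh).resolve_right hdm
          exact hcne (funext fun j => by fin_cases j <;> simp [h0, hzero, h2])
      exact ⟨hcy, d_second_ne (c (m + 1)) (d (m + 1)) hcy hdne hqB hbil⟩
  -- affine parameters
  set u : ℕ → k := fun i => c i 0 / c i 1 with hudef
  set v : ℕ → k := fun i => d i 0 / d i 1 with hvdef
  have hc0 : ∀ i, 1 ≤ i → c i 0 = u i * c i 1 := by
    intro i hi
    have h := (key i hi).1
    rw [hudef]
    field_simp
  have hd0 : ∀ i, 1 ≤ i → d i 0 = v i * d i 1 := by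
    intro i hi
    have h := (key i hi).2
    rw [hvdef]
    field_simp
  have hc2 : ∀ i, 1 ≤ i → c i 2 = ((u i) ^ 2 + t * u i + a) * c i 1 := by
    intro i hi
    obtain ⟨-, -, hqA, -, -, -, -, -, -⟩ := hP i hi
    rw [bilinA] at hqA
    have hcy := (key i hi).1
    have hz : (c i 2 - ((u i) ^ 2 + t * u i + a) * c i 1) * c i 1 = 0 := by
      linear_combination (-1) * hqA + (c i 0 + u i * c i 1 + t * c i 1) * hc0 i hi
    have := (mul_eq_zero.mp hz).resolve_right hcy
    linear_combination this
  have hd2 : ∀ i, 1 ≤ i → d i 2 = (v i) ^ 2 * d i 1 := by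
    intro i hi
    obtain ⟨-, -, -, hqB, -, -, -, -, -⟩ := hP i hi
    rw [bilinB] at hqB
    have hdy := (key i hi).2
    have hz : (d i 2 - (v i) ^ 2 * d i 1) * d i 1 = 0 := by
      linear_combination (-1) * hqB + (d i 0 + v i * d i 1) * hd0 i hi
    have := (mul_eq_zero.mp hz).resolve_right hdy
    linear_combination this
  -- tangency relation from bilinear vanishing
  have hR : ∀ i j, 1 ≤ i → 1 ≤ j →
      c i ⬝ᵥ (!![1, 0, 0; 0, 0, -(1 / 2); 0, -(1 / 2), 0]).mulVec (d j) = 0 →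
      (u i - v j) ^ 2 + t * u i + a = 0 := by
    intro i j hi hj hbil
    rw [bilinB] at hbil
    have hcy := (key i hi).1
    have hdy := (key j hj).2
    have hz : ((u i - v j) ^ 2 + t * u i + a) * (c i 1 * d j 1) = 0 := by
      linear_combination (-2) * hbil + 2 * d j 0 * hc0 i hi - d j 1 * hc2 i hi
        + 2 * u i * c i 1 * hd0 j hj - c i 1 * hd2 j hj
    exact (mul_eq_zero.mp hz).resolve_right (mul_ne_zero hcy hdy)
  -- membership: roots of the tangency quadratic are u i or u (i+1)
  have hrootC : ∀ i, 1 ≤ i → ∀ r : k, (r - v i) ^ 2 + t * r + a = 0 →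
      r = u i ∨ r = u (i + 1) := by
    intro i hi r hr
    obtain ⟨-, -, -, -, -, -, hmem, -, -⟩ := hP i hi
    have hx := hmem ![r, 1, r ^ 2 + t * r + a]
      (by intro h; have := congrFun h 1; simp at this)
      (by rw [bilinA]; simp; ring)
      (by rw [bilinB]; simp
          linear_combination r * hd0 i hi + (-(1 : k) / 2) * hd2 i hi + (-(d i 1) / 2) * hr)
    rcases hx with ⟨s, hs⟩ | ⟨s, hs⟩
    · left
      have e0 := congrFun hs 0
      have e1 := congrFun hs 1
      simp only [Matrix.cons_val_zero, Matrix.cons_val_one, Matrix.head_cons, Pi.smul_apply,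
        smul_eq_mul] at e0 e1
      linear_combination e0 + s * hc0 i hi - u i * e1
    · right
      have e0 := congrFun hs 0
      have e1 := congrFun hs 1
      simp only [Matrix.cons_val_zero, Matrix.cons_val_one, Matrix.head_cons, Pi.smul_apply,
        smul_eq_mul] at e0 e1
      linear_combination e0 + s * hc0 (i + 1) (by omega) - u (i + 1) * e1
  -- membership: roots of the dual quadratic are v i or v (i+1)
  have hrootD : ∀ i, 1 ≤ i → ∀ r : k, (u (i + 1) - r) ^ 2 + t * u (i + 1) + a = 0 →
      r = v i ∨ r = v (i + 1) := by
    intro i hi r hr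
    obtain ⟨-, -, -, -, -, -, -, -, hmem⟩ := hP i hi
    have hy := hmem ![r, 1, r ^ 2]
      (by intro h; have := congrFun h 1; simp at this)
      (by rw [bilinB]; simp; ring)
      (by rw [bilinB]; simp
          linear_combination r * hc0 (i + 1) (by omega) + (-(1 : k) / 2) * hc2 (i + 1) (by omega)
            + (-(c (i + 1) 1) / 2) * hr)
    rcases hy with ⟨s, hs⟩ | ⟨s, hs⟩
    · left
      have e0 := congrFun hs 0
      have e1 := congrFun hs 1
      simp only [Matrix.cons_val_zero, Matrix.cons_val_one, Matrix.head_cons, Pi.smul_apply,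
        smul_eq_mul] at e0 e1
      linear_combination e0 + s * hd0 i hi - v i * e1
    · right
      have e0 := congrFun hs 0
      have e1 := congrFun hs 1
      simp only [Matrix.cons_val_zero, Matrix.cons_val_one, Matrix.head_cons, Pi.smul_apply,
        smul_eq_mul] at e0 e1
      linear_combination e0 + s * hd0 (i + 1) (by omega) - v (i + 1) * e1
  -- Vieta relations
  have vietaU : ∀ i, 1 ≤ i →
      u i + u (i + 1) = 2 * v i - t ∧ u i * u (i + 1) = (v i) ^ 2 + a := by
    intro i hi
    obtain ⟨-, -, -, -, hbil5, hbil6, -, -, -⟩ := hP i hi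
    have h1 := hR i i hi hi hbil5
    have h2 := hR (i + 1) i (by omega) hi hbil6
    have hr : ((2 * v i - t - u i) - v i) ^ 2 + t * (2 * v i - t - u i) + a = 0 := by
      linear_combination h1
    rcases hrootC i hi (2 * v i - t - u i) hr with he | he
    · have hsq : (u (i + 1) - u i) ^ 2 = 0 := by
        linear_combination h2 - h1 + (u (i + 1) - u i) * he
      have hUu : u (i + 1) = u i := by
        have := pow_eq_zero_iff (n := 2) (by norm_num) |>.mp hsq
        linear_combination this
      constructor
      · linear_combination hUu - he
      · linear_combination (-1) * h1 - u i * he + u i * hUu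
    · constructor
      · linear_combination (-1) * he
      · linear_combination (-1) * h1 - u i * he
  have vietaV : ∀ i, 1 ≤ i → v i + v (i + 1) = 2 * u (i + 1) := by
    intro i hi
    obtain ⟨-, -, -, -, -, hbil6, -, hbil8, -⟩ := hP i hi
    have h1 := hR (i + 1) i (by omega) hi hbil6
    have h2 := hR (i + 1) (i + 1) (by omega) (by omega) hbil8
    have hr : (u (i + 1) - (2 * u (i + 1) - v i)) ^ 2 + t * u (i + 1) + a = 0 := by
      linear_combination h1
    rcases hrootD i hi (2 * u (i + 1) - v i) hr with he | he
    · have hsq : (v (i + 1) - v i) ^ 2 = 0 := by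
        linear_combination h2 - h1 + (v (i + 1) - v i) * he
      have hVv : v (i + 1) = v i := by
        have := pow_eq_zero_iff (n := 2) (by norm_num) |>.mp hsq
        linear_combination this
      linear_combination hVv - he
    · linear_combination (-1) * he
  -- dynamics of p i = v i - u i
  have hpstep : ∀ i, 1 ≤ i → v (i + 1) - u (i + 1) = (v i - u i) - t := by
    intro i hi
    linear_combination (vietaU i hi).1 + vietaV i hi
  have hpn : ∀ m : ℕ, v (m + 1) - u (m + 1) = (v 1 - u 1) - m * t := by
    intro m
    induction m with
    | zero => simp
    | succ l ih =>
      have h := hpstep (l + 1) (by omega)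
      rw [h, ih]
      push_cast
      ring
  -- closure gives u (n+1) = u 1, v (n+1) = v 1
  obtain ⟨⟨s, hs⟩, ⟨s', hs'⟩⟩ := hstop
  have hcyn := (key (n + 1) (by omega)).1
  have hdyn := (key (n + 1) (by omega)).2
  have hun : u (n + 1) = u 1 := by
    have e0 := congrFun hs 0
    have e1 := congrFun hs 1
    simp only [Pi.smul_apply, smul_eq_mul] at e0 e1
    have hz : (u (n + 1) - u 1) * c (n + 1) 1 = 0 := by
      linear_combination (-1) * hc0 (n + 1) (by omega) + e0 + s * hc0 1 le_rfl - u 1 * e1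
    have := (mul_eq_zero.mp hz).resolve_right hcyn
    linear_combination this
  have hvn : v (n + 1) = v 1 := by
    have e0 := congrFun hs' 0
    have e1 := congrFun hs' 1
    simp only [Pi.smul_apply, smul_eq_mul] at e0 e1
    have hz : (v (n + 1) - v 1) * d (n + 1) 1 = 0 := by
      linear_combination (-1) * hd0 (n + 1) (by omega) + e0 + s' * hd0 1 le_rfl - v 1 * e1
    have := (mul_eq_zero.mp hz).resolve_right hdyn
    linear_combination this
  -- t = 0
  have hn' : (n : k) ≠ 0 := Nat.cast_ne_zero.mpr (by omega)
  have hpt : (n : k) * t = 0 := by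
    have h := hpn n
    rw [hun, hvn] at h
    linear_combination h
  have ht : t = 0 := (mul_eq_zero.mp hpt).resolve_left hn'
  have ha : a ≠ 0 := by
    intro h
    exact hta (by rw [ht, h])
  -- a = -(p 1)^2
  have hstar : a = -(v 1 - u 1) ^ 2 := by
    have h1 := (vietaU 1 le_rfl).1
    have h2 := (vietaU 1 le_rfl).2
    linear_combination (-1) * h2 + u 1 * h1 - u 1 * ht
  have hp1 : v 1 - u 1 ≠ 0 := by
    intro h
    apply ha
    rw [hstar, h]
    ring
  -- u advances by 2 * (v 1 - u 1) each step
  have hu_step : ∀ i, 1 ≤ i → u (i + 1) = u i + 2 * (v 1 - u 1) := by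
    intro i hi
    have h1 := (vietaU i hi).1
    obtain ⟨m, rfl⟩ : ∃ m, i = m + 1 := ⟨i - 1, by omega⟩
    have hpi : v (m + 1) - u (m + 1) = v 1 - u 1 := by
      have h := hpn m
      rw [ht] at h
      simpa using h
    linear_combination h1 + 2 * hpi - ht
  have hu_n : ∀ m : ℕ, u (m + 1) = u 1 + 2 * m * (v 1 - u 1) := by
    intro m
    induction m with
    | zero => simp
    | succ l ih =>
      rw [hu_step (l + 1) (by omega), ih]
      push_cast
      ring
  have hfin := hu_n n
  rw [hun] at hfin
  have hz : (2 * (n : k)) * (v 1 - u 1) = 0 := by linear_combination (-1) * hfin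
  exact hp1 ((mul_eq_zero.mp hz).resolve_left (mul_ne_zero two_ne_zero hn'))
end

section
/- Assume char k = p where p > 2 is a prime. Let t, a ∈ k with (t,a) ≠ (0,0), let A be the symmetric matrix of the quadratic form x² + txy + ay² − yz (so C_A : x² + txy + ay² − yz = 0) and B the symmetric matrix of x² − yz (so C_B : x² − yz = 0); these are smooth conics which intersect at [0:0:1] with multiplicity at least 3 (they are osculating). Then every Poncelet sequence (c,d) for (A,B) stops after p steps, i.e. c_{p+1} is a scalar multiple of c₁ and d_{p+1} is a scalar multiple of d₁. -/
open Matrix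

section PonceletAux
variable {k : Type*} [Field k]

lemma pairB' (v w : Fin 3 → k) :
    v ⬝ᵥ (!![1, 0, 0; 0, 0, -(1/2); 0, -(1/2), 0] : Matrix (Fin 3) (Fin 3) k).mulVec w
      = v 0 * w 0 - (v 1 * w 2 + v 2 * w 1) / 2 := by
  simp [Matrix.mulVec, dotProduct, Fin.sum_univ_three, Matrix.vecHead, Matrix.vecTail]
  ring

lemma pairA' (t a : k) (v w : Fin 3 → k) :
    v ⬝ᵥ (!![1, t/2, 0; t/2, a, -(1/2); 0, -(1/2), 0] : Matrix (Fin 3) (Fin 3) k).mulVec w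
      = v 0 * w 0 + t/2 * (v 0 * w 1 + v 1 * w 0) + a * (v 1 * w 1)
        - (v 1 * w 2 + v 2 * w 1) / 2 := by
  simp [Matrix.mulVec, dotProduct, Fin.sum_univ_three, Matrix.vecHead, Matrix.vecTail]
  ring

lemma pairB0 (h2 : (2:k) ≠ 0) (v w : Fin 3 → k) :
    v ⬝ᵥ (!![1, 0, 0; 0, 0, -(1/2); 0, -(1/2), 0] : Matrix (Fin 3) (Fin 3) k).mulVec w = 0 ↔
      2 * (v 0 * w 0) - v 1 * w 2 - v 2 * w 1 = 0 := by
  have hhalf : (2:k) * 2⁻¹ = 1 := mul_inv_cancel₀ h2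
  rw [pairB']
  constructor <;> intro h
  · linear_combination 2*h + (v 1 * w 2 + v 2 * w 1) * hhalf
  · linear_combination h/2 - (v 0 * w 0) * hhalf

lemma pairA0 (t a : k) (h2 : (2:k) ≠ 0) (v w : Fin 3 → k) :
    v ⬝ᵥ (!![1, t/2, 0; t/2, a, -(1/2); 0, -(1/2), 0] : Matrix (Fin 3) (Fin 3) k).mulVec w = 0 ↔
      2 * (v 0 * w 0) + t * (v 0 * w 1 + v 1 * w 0) + 2 * a * (v 1 * w 1)
        - v 1 * w 2 - v 2 * w 1 = 0 := by
  have hhalf : (2:k) * 2⁻¹ = 1 := mul_inv_cancel₀ h2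
  rw [pairA']
  constructor <;> intro h
  · linear_combination 2*h + (v 1 * w 2 + v 2 * w 1 - t * (v 0 * w 1 + v 1 * w 0)) * hhalf
  · linear_combination h/2 - (v 0 * w 0 + a * (v 1 * w 1)) * hhalf

lemma e3A' (t a : k) (h2 : (2:k) ≠ 0) (x : Fin 3 → k) (hx : x ≠ 0)
    (hq : x ⬝ᵥ (!![1, t/2, 0; t/2, a, -(1/2); 0, -(1/2), 0] : Matrix (Fin 3) (Fin 3) k).mulVec x = 0)
    (h1 : x 1 = 0) : ∃ s : k, s ≠ 0 ∧ x = s • ![0,0,1] := by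
  rw [pairA0 t a h2] at hq
  have h0 : x 0 = 0 := by
    have hsq : (2:k) * x 0 ^ 2 = 0 := by
      linear_combination hq - (t * x 0 + 2 * a * x 1 + t * x 0 - x 2 - x 2) * h1
    have : x 0 ^ 2 = 0 := by
      rcases mul_eq_zero.mp hsq with h | h
      · exact absurd h h2
      · exact h
    exact pow_eq_zero_iff (by norm_num) |>.mp this
  refine ⟨x 2, ?_, ?_⟩
  · intro hz; apply hx; funext j; fin_cases j <;> simp [h0, h1, hz]
  · funext j; fin_cases j <;> simp [h0, h1]

lemma e3B' (h2 : (2:k) ≠ 0) (x : Fin 3 → k) (hx : x ≠ 0)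
    (hq : x ⬝ᵥ (!![1, 0, 0; 0, 0, -(1/2); 0, -(1/2), 0] : Matrix (Fin 3) (Fin 3) k).mulVec x = 0)
    (h1 : x 1 = 0) : ∃ s : k, s ≠ 0 ∧ x = s • ![0,0,1] := by
  rw [pairB0 h2] at hq
  have h0 : x 0 = 0 := by
    have hsq : (2:k) * x 0 ^ 2 = 0 := by
      linear_combination hq + (x 2 + x 2) * h1
    have : x 0 ^ 2 = 0 := by
      rcases mul_eq_zero.mp hsq with h | h
      · exact absurd h h2
      · exact h
    exact pow_eq_zero_iff (by norm_num) |>.mp this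
  refine ⟨x 2, ?_, ?_⟩
  · intro hz; apply hx; funext j; fin_cases j <;> simp [h0, h1, hz]
  · funext j; fin_cases j <;> simp [h0, h1]

end PonceletAux

/-- **Poncelet's theorem for osculating conics in positive characteristic `p > 2`.**
For the osculating conics `C_A : x² + txy + ay² − yz = 0` and `C_B : x² − yz = 0` over an
algebraically closed field of characteristic `p > 2`, every Poncelet sequence stops after
`p` steps. -/
theorem poncelet_osculating_char_p {k : Type*} [Field k] [IsAlgClosed k]
    (p : ℕ) (hp : p.Prime) (hp2 : 2 < p) [CharP k p]
    (t a : k) (hta : (t, a) ≠ (0, 0)) :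
    ∀ c d : ℕ → Fin 3 → k,
      PonceletSeq (!![1, t / 2, 0; t / 2, a, -(1 / 2); 0, -(1 / 2), 0])
        (!![1, 0, 0; 0, 0, -(1 / 2); 0, -(1 / 2), 0]) c d →
      PonceletStops c d p := by
  intro c d hcd
  have h2 : (2 : k) ≠ 0 := by
    have h : ((2 : ℕ) : k) ≠ 0 := by
      rw [Ne, CharP.cast_eq_zero_iff k p]
      intro h
      have := Nat.le_of_dvd (by norm_num) h
      omega
    simpa using h
  unfold PonceletSeq at hcd
  unfold PonceletStops
  have hc0 : ∀ i, 1 ≤ i → c i ≠ 0 := fun i hi => (hcd i hi).1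
  have hd0 : ∀ i, 1 ≤ i → d i ≠ 0 := fun i hi => (hcd i hi).2.1
  have hcc : ∀ i, 1 ≤ i →
      c i ⬝ᵥ (!![1, t / 2, 0; t / 2, a, -(1 / 2); 0, -(1 / 2), 0]).mulVec (c i) = 0 :=
    fun i hi => (hcd i hi).2.2.1
  have hdd : ∀ i, 1 ≤ i →
      d i ⬝ᵥ (!![1, 0, 0; 0, 0, -(1 / 2); 0, -(1 / 2), 0]).mulVec (d i) = 0 :=
    fun i hi => (hcd i hi).2.2.2.1
  have hcdi : ∀ i, 1 ≤ i →
      c i ⬝ᵥ (!![1, 0, 0; 0, 0, -(1 / 2); 0, -(1 / 2), 0]).mulVec (d i) = 0 :=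
    fun i hi => (hcd i hi).2.2.2.2.1
  have hcsd : ∀ i, 1 ≤ i →
      c (i+1) ⬝ᵥ (!![1, 0, 0; 0, 0, -(1 / 2); 0, -(1 / 2), 0]).mulVec (d i) = 0 :=
    fun i hi => (hcd i hi).2.2.2.2.2.1
  have hcov1 := fun i hi => (hcd i hi).2.2.2.2.2.2.1
  have hcov2 := fun i hi => (hcd i hi).2.2.2.2.2.2.2.2
  -- component lemmas for scaled vectors
  have comp0 : ∀ (s x y z : k), (s • (![x, y, z] : Fin 3 → k)) 0 = s * x := by intros; simp
  have comp1 : ∀ (s x y z : k), (s • (![x, y, z] : Fin 3 → k)) 1 = s * y := by intros; simp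
  have comp2 : ∀ (s x y z : k), (s • (![x, y, z] : Fin 3 → k)) 2 = s * z := by intros; simp
  -- if one side of a B-pairing is a multiple of (0,0,1), the other side has vanishing
  -- second coordinate
  have yzero : ∀ (w : Fin 3 → k) (s : k), s ≠ 0 → w = s • ![0,0,1] →
      ∀ v : Fin 3 → k,
        v ⬝ᵥ (!![1, 0, 0; 0, 0, -(1 / 2); 0, -(1 / 2), 0]).mulVec w = 0 → v 1 = 0 := by
    intro w s hs hw v hv
    rw [hw, pairB0 h2, comp0, comp1, comp2] at hv
    have hv' : v 1 * s = 0 := by linear_combination -hv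
    rcases mul_eq_zero.mp hv' with h | h
    · exact h
    · exact absurd h hs
  have yzero2 : ∀ (v : Fin 3 → k) (s : k), s ≠ 0 → v = s • ![0,0,1] →
      ∀ w : Fin 3 → k,
        v ⬝ᵥ (!![1, 0, 0; 0, 0, -(1 / 2); 0, -(1 / 2), 0]).mulVec w = 0 → w 1 = 0 := by
    intro v s hs hv w hw
    rw [hv, pairB0 h2, comp0, comp1, comp2] at hw
    have hw' : s * w 1 = 0 := by linear_combination -hw
    rcases mul_eq_zero.mp hw' with h | h
    · exact absurd h hs
    · exact h
  by_cases hd11 : (d 1) 1 = 0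
  · -- degenerate case: everything is stuck at [0:0:1]
    obtain ⟨s1, hs1, he1⟩ := e3B' h2 (d 1) (hd0 1 le_rfl) (hdd 1 le_rfl) hd11
    have hdall : ∀ i, ∃ s : k, s ≠ 0 ∧ d (i+1) = s • ![0,0,1] := by
      intro i
      induction i with
      | zero => exact ⟨s1, hs1, he1⟩
      | succ n ih =>
        obtain ⟨s, hs, hds⟩ := ih
        have hcy : (c (n+2)) 1 = 0 := yzero _ s hs hds _ (hcsd (n+1) (by omega))
        obtain ⟨σ, hσ, hce⟩ :=
          e3A' t a h2 (c (n+2)) (hc0 (n+2) (by omega)) (hcc (n+2) (by omega)) hcy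
        have hdy : (d (n+2)) 1 = 0 := yzero2 _ σ hσ hce _ (hcdi (n+2) (by omega))
        exact e3B' h2 (d (n+2)) (hd0 (n+2) (by omega)) (hdd (n+2) (by omega)) hdy
    obtain ⟨sp, hsp, hdp⟩ := hdall p
    constructor
    · have hc1y : (c 1) 1 = 0 := yzero _ s1 hs1 he1 _ (hcdi 1 le_rfl)
      obtain ⟨σ1, hσ1, hc1e⟩ := e3A' t a h2 (c 1) (hc0 1 le_rfl) (hcc 1 le_rfl) hc1y
      have hcpy : (c (p+1)) 1 = 0 := yzero _ sp hsp hdp _ (hcdi (p+1) (by omega))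
      obtain ⟨σp, hσp, hcpe⟩ :=
        e3A' t a h2 (c (p+1)) (hc0 (p+1) (by omega)) (hcc (p+1) (by omega)) hcpy
      refine ⟨σp * σ1⁻¹, ?_⟩
      rw [hcpe, hc1e, smul_smul]
      congr 1
      field_simp
    · refine ⟨sp * s1⁻¹, ?_⟩
      rw [hdp, he1, smul_smul]
      congr 1
      field_simp
  · -- main case
    have hprop : ∀ i, 1 ≤ i → (d i) 1 ≠ 0 → (c (i+1)) 1 ≠ 0 ∧ (d (i+1)) 1 ≠ 0 := by
      intro i hi hdi
      have hc1 : (c (i+1)) 1 ≠ 0 := by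
        intro hzero
        obtain ⟨σ, hσ, hce⟩ :=
          e3A' t a h2 (c (i+1)) (hc0 (i+1) (by omega)) (hcc (i+1) (by omega)) hzero
        exact hdi (yzero2 _ σ hσ hce _ (hcsd i hi))
      refine ⟨hc1, ?_⟩
      intro hzero
      obtain ⟨τ, hτ, hde⟩ :=
        e3B' h2 (d (i+1)) (hd0 (i+1) (by omega)) (hdd (i+1) (by omega)) hzero
      exact hc1 (yzero _ τ hτ hde _ (hcdi (i+1) (by omega)))
    have hdne : ∀ i, (d (i+1)) 1 ≠ 0 := by
      intro i
      induction i with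
      | zero => exact hd11
      | succ n ih => exact (hprop (n+1) (by omega) ih).2
    have hcne : ∀ i, 1 ≤ i → (c i) 1 ≠ 0 := by
      intro i hi
      rcases Nat.lt_or_ge i 2 with h | h
      · have : i = 1 := by omega
        subst this
        intro hzero
        obtain ⟨σ, hσ, hce⟩ := e3A' t a h2 (c 1) (hc0 1 le_rfl) (hcc 1 le_rfl) hzero
        exact hd11 (yzero2 _ σ hσ hce _ (hcdi 1 le_rfl))
      · obtain ⟨j, rfl⟩ : ∃ j, i = (j+1)+1 := ⟨i - 2, by omega⟩
        exact (hprop (j+1) (by omega) (hdne j)).1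
    -- normalization
    have hex : ∀ i, ∃ U s : k, 1 ≤ i → (s ≠ 0 ∧ c i = s • ![U, 1, U^2 + t*U + a]) := by
      intro i
      by_cases hi : 1 ≤ i
      · refine ⟨c i 0 / c i 1, c i 1, fun _ => ⟨hcne i hi, ?_⟩⟩
        have h1 := hcne i hi
        have hq := hcc i hi
        rw [pairA0 t a h2] at hq
        funext j; fin_cases j
        · show c i 0 = c i 1 * (c i 0 / c i 1)
          field_simp
        · show c i 1 = c i 1 * 1
          ring
        · show c i 2 = c i 1 * ((c i 0 / c i 1)^2 + t * (c i 0 / c i 1) + a)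
          have key : c i 1 * c i 2 = c i 0^2 + t * c i 0 * c i 1 + a * c i 1^2 := by
            have hh : (2:k) * (c i 1 * c i 2)
                = 2 * (c i 0^2 + t * c i 0 * c i 1 + a * c i 1^2) := by
              linear_combination -hq
            exact mul_left_cancel₀ h2 hh
          have hrw : c i 1 * ((c i 0 / c i 1)^2 + t * (c i 0 / c i 1) + a)
              = (c i 0^2 + t * c i 0 * c i 1 + a * c i 1^2) / c i 1 := by
            field_simp
          rw [hrw, eq_div_iff h1]
          linear_combination key
      · exact ⟨0, 0, fun h => absurd h hi⟩
    choose u su hu using hex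
    have hex' : ∀ i, ∃ M r : k, 1 ≤ i → (r ≠ 0 ∧ d i = r • ![M, 1, M^2]) := by
      intro i
      by_cases hi : 1 ≤ i
      · have h1 : (d i) 1 ≠ 0 := by
          obtain ⟨j, rfl⟩ : ∃ j, i = j + 1 := ⟨i - 1, by omega⟩
          exact hdne j
        refine ⟨d i 0 / d i 1, d i 1, fun _ => ⟨h1, ?_⟩⟩
        have hq := hdd i hi
        rw [pairB0 h2] at hq
        funext j; fin_cases j
        · show d i 0 = d i 1 * (d i 0 / d i 1)
          field_simp
        · show d i 1 = d i 1 * 1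
          ring
        · show d i 2 = d i 1 * (d i 0 / d i 1)^2
          have key : d i 1 * d i 2 = d i 0^2 := by
            have hh : (2:k) * (d i 1 * d i 2) = 2 * d i 0^2 := by
              linear_combination -hq
            exact mul_left_cancel₀ h2 hh
          have hrw : d i 1 * (d i 0 / d i 1)^2 = d i 0^2 / d i 1 := by
            field_simp
          rw [hrw, eq_div_iff h1]
          linear_combination key
      · exact ⟨0, 0, fun h => absurd h hi⟩
    choose m rm hm using hex'
    -- the incidence relation F(U,M) = (U-M)² + tU + a = 0
    have hFzero : ∀ (x y : Fin 3 → k) (sx sy U M : k), sx ≠ 0 → sy ≠ 0 →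
        x = sx • ![U, 1, U^2 + t*U + a] → y = sy • ![M, 1, M^2] →
        x ⬝ᵥ (!![1, 0, 0; 0, 0, -(1 / 2); 0, -(1 / 2), 0]).mulVec y = 0 →
        (U - M)^2 + t*U + a = 0 := by
      intro x y sx sy U M hsx hsy hx hy hzero
      rw [hx, hy, pairB0 h2, comp0, comp0, comp1, comp1, comp2, comp2] at hzero
      have h' : sx * (sy * ((U - M)^2 + t*U + a)) = 0 := by linear_combination -hzero
      rcases mul_eq_zero.mp h' with h | h
      · exact absurd h hsx
      rcases mul_eq_zero.mp h with h | h
      · exact absurd h hsy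
      · exact h
    have hF1 : ∀ i, 1 ≤ i → (u i - m i)^2 + t * u i + a = 0 := fun i hi =>
      hFzero _ _ _ _ _ _ (hu i hi).1 (hm i hi).1 (hu i hi).2 (hm i hi).2 (hcdi i hi)
    have hF2 : ∀ i, 1 ≤ i → (u (i+1) - m i)^2 + t * u (i+1) + a = 0 := fun i hi =>
      hFzero _ _ _ _ _ _ (hu (i+1) (by omega)).1 (hm i hi).1 (hu (i+1) (by omega)).2
        (hm i hi).2 (hcsd i hi)
    -- first sum relation: the two chords through the tangent line at `d i`
    have hsum1 : ∀ i, 1 ≤ i → u i + u (i+1) = 2 * m i - t := by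
      intro i hi
      set r : k := 2 * m i - t - u i with hr
      have hFr : (r - m i)^2 + t*r + a = 0 := by
        rw [hr]; linear_combination hF1 i hi
      have hx0 : (![r, 1, r^2 + t*r + a] : Fin 3 → k) ≠ 0 := by
        intro h
        have := congrFun h 1
        simp at this
      have hxA : (![r, 1, r^2 + t*r + a] : Fin 3 → k) ⬝ᵥ
          (!![1, t / 2, 0; t / 2, a, -(1 / 2); 0, -(1 / 2), 0]).mulVec
            ![r, 1, r^2 + t*r + a] = 0 := by
        rw [pairA0 t a h2]
        simp
        ring
      have hxL : (![r, 1, r^2 + t*r + a] : Fin 3 → k) ⬝ᵥ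
          (!![1, 0, 0; 0, 0, -(1 / 2); 0, -(1 / 2), 0]).mulVec (d i) = 0 := by
        rw [(hm i hi).2, pairB0 h2, comp0, comp1, comp2]
        simp only [Matrix.cons_val_zero, Matrix.cons_val_one, Matrix.head_cons]
        show 2 * (r * (rm i * m i)) - 1 * (rm i * (m i)^2) - (r^2 + t*r + a) * (rm i * 1) = 0
        linear_combination (-(rm i)) * hFr
      have hext : ∀ j, 1 ≤ j → (∃ s : k, (![r, 1, r^2 + t*r + a] : Fin 3 → k) = s • c j) →
          r = u j := by
        intro j hj ⟨s, hs⟩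
        rw [(hu j hj).2, smul_smul] at hs
        have h1 := congrFun hs 1
        have h0 := congrFun hs 0
        rw [comp1] at h1
        rw [comp0] at h0
        simp at h1 h0
        rw [h0, ← h1]
        ring
      rcases hcov1 i hi _ hx0 hxA hxL with h | h
      · -- r = u i : tangency (double contact)
        have hru : r = u i := hext i hi h
        have hdr : 2 * u i = 2 * m i - t := by rw [hr] at hru; linear_combination -hru
        have hsq : (u (i+1) - u i)^2 = 0 := by
          linear_combination hF2 i hi + (u i - u (i+1)) * hdr - hF1 i hi
        have huu : u (i+1) = u i := by
          have := pow_eq_zero_iff (n := 2) (by norm_num) |>.mp hsq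
          linear_combination this
        rw [huu]
        linear_combination hdr
      · have hru : r = u (i+1) := hext (i+1) (by omega) h
        rw [hr] at hru
        linear_combination -hru
    -- second sum relation: the two tangent points seen from `c (i+1)`
    have hsum2 : ∀ i, 1 ≤ i → m i + m (i+1) = 2 * u (i+1) := by
      intro i hi
      set r : k := 2 * u (i+1) - m i with hr
      have hFr : (u (i+1) - r)^2 + t * u (i+1) + a = 0 := by
        rw [hr]; linear_combination hF2 i hi
      have hy0 : (![r, 1, r^2] : Fin 3 → k) ≠ 0 := by
        intro h
        have := congrFun h 1
        simp at this
      have hyB : (![r, 1, r^2] : Fin 3 → k) ⬝ᵥ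
          (!![1, 0, 0; 0, 0, -(1 / 2); 0, -(1 / 2), 0]).mulVec ![r, 1, r^2] = 0 := by
        rw [pairB0 h2]
        simp
        ring
      have hyL : c (i+1) ⬝ᵥ
          (!![1, 0, 0; 0, 0, -(1 / 2); 0, -(1 / 2), 0]).mulVec (![r, 1, r^2] : Fin 3 → k)
            = 0 := by
        rw [(hu (i+1) (by omega : (1:ℕ) ≤ i+1)).2, pairB0 h2, comp0, comp1, comp2]
        simp only [Matrix.cons_val_zero, Matrix.cons_val_one, Matrix.head_cons]
        show 2 * ((su (i+1) * u (i+1)) * r) - (su (i+1) * 1) * r^2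
          - (su (i+1) * ((u (i+1))^2 + t * u (i+1) + a)) * 1 = 0
        linear_combination (-(su (i+1))) * hFr
      have hext : ∀ j, 1 ≤ j → (∃ s : k, (![r, 1, r^2] : Fin 3 → k) = s • d j) →
          r = m j := by
        intro j hj ⟨s, hs⟩
        rw [(hm j hj).2, smul_smul] at hs
        have h1 := congrFun hs 1
        have h0 := congrFun hs 0
        rw [comp1] at h1
        rw [comp0] at h0
        simp at h1 h0
        rw [h0, ← h1]
        ring
      rcases hcov2 i hi _ hy0 hyB hyL with h | h
      · -- r = m i : tangency
        have hrm : r = m i := hext i hi h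
        have hdr : 2 * m i = 2 * u (i+1) := by rw [hr] at hrm; linear_combination -hrm
        have hsq : (m (i+1) - m i)^2 = 0 := by
          linear_combination hF1 (i+1) (by omega) - hF2 i hi + (m i - m (i+1)) * hdr
        have hmm : m (i+1) = m i := by
          have := pow_eq_zero_iff (n := 2) (by norm_num) |>.mp hsq
          linear_combination this
        rw [hmm]
        linear_combination hdr
      · have hrm : r = m (i+1) := hext (i+1) (by omega) h
        rw [hr] at hrm
        linear_combination -hrm
    -- closed form of the recurrence
    have hclosed : ∀ i : ℕ,
        u (i+1) = u 1 + 2*(i:k)*(m 1 - u 1) - (i:k)^2*t ∧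
        m (i+1) = u (i+1) + (m 1 - u 1) - (i:k)*t := by
      intro i
      induction i with
      | zero => constructor <;> simp
      | succ n ih =>
        obtain ⟨ihu, ihm⟩ := ih
        have h1 := hsum1 (n+1) (by omega)
        have h2 := hsum2 (n+1) (by omega)
        constructor
        · push_cast
          linear_combination h1 + 2*ihm + ihu
        · push_cast
          linear_combination h1 + h2 + ihm
    obtain ⟨hup, hmp⟩ := hclosed p
    have hpz : ((p : ℕ) : k) = 0 := CharP.cast_eq_zero k p
    have hu_eq : u (p+1) = u 1 := by rw [hup, hpz]; ring
    have hm_eq : m (p+1) = m 1 := by rw [hmp, hu_eq, hpz]; ring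
    constructor
    · obtain ⟨hsu1, hcu1⟩ := hu 1 le_rfl
      obtain ⟨hsup, hcup⟩ := hu (p+1) (by omega)
      refine ⟨su (p+1) * (su 1)⁻¹, ?_⟩
      rw [hcup, hu_eq, hcu1, smul_smul]
      congr 1
      field_simp
    · obtain ⟨hr1, hd1⟩ := hm 1 le_rfl
      obtain ⟨hrp, hdp⟩ := hm (p+1) (by omega)
      refine ⟨rm (p+1) * (rm 1)⁻¹, ?_⟩
      rw [hdp, hm_eq, hd1, smul_smul]
      congr 1
      field_simp
end

section
/- Let A and B be invertible symmetric 3×3 matrices over k. Let c = (c₁, c₂, 1) and d = (d₁, d₂, 1) be vectors in k³ with cᵀAc = 0, dᵀBd = 0, and cᵀBd = 0. Let J be the 3×4 matrix over k whose rows are ((Ac)₁, (Ac)₂, 0, 0), (0, 0, (Bd)₁, (Bd)₂), and ((Bd)₁, (Bd)₂, (Bc)₁, (Bc)₂), where (v)ⱼ denotes the j-th coordinate of a vector v ∈ k³. Then rank J ≥ 2, and rank J = 2 if and only if c = d and the vectors Ac and Bc are linearly dependent (i.e., the conics C_A and C_B are tangent at [c]). -/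
open Matrix Submodule Module

lemma two_le_rank_aux {k : Type*} [Field k] (M : Matrix (Fin 3) (Fin 4) k) (p q : Fin 4)
    (h0p : M 0 p ≠ 0) (h1p : M 1 p = 0) (h0q : M 0 q = 0) (h1q : M 1 q ≠ 0) :
    2 ≤ M.rank := by
  have hli : LinearIndependent k ![Mᵀ p, Mᵀ q] := by
    rw [LinearIndependent.pair_iff]
    intro s t hst
    have e0 := congrFun hst 0
    have e1 := congrFun hst 1
    simp only [Pi.add_apply, Pi.smul_apply, transpose_apply, smul_eq_mul, Pi.zero_apply,
      h0q, h1p, mul_zero, add_zero, zero_add] at e0 e1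
    exact ⟨by rcases mul_eq_zero.mp e0 with h | h; exact h; exact absurd h h0p,
      by rcases mul_eq_zero.mp e1 with h | h; exact h; exact absurd h h1q⟩
  rw [rank_eq_finrank_span_cols]
  have hsub : Set.range ![Mᵀ p, Mᵀ q] ⊆ Set.range Mᵀ := by
    rintro x ⟨i, rfl⟩
    fin_cases i
    exacts [⟨p, rfl⟩, ⟨q, rfl⟩]
  calc (2 : ℕ) = finrank k (span k (Set.range ![Mᵀ p, Mᵀ q])) := by
        rw [finrank_span_eq_card hli]; simp
    _ ≤ finrank k (span k (Set.range Mᵀ)) := Submodule.finrank_mono (span_mono hsub)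

lemma rank_le_two_aux {k : Type*} [Field k] (M : Matrix (Fin 3) (Fin 4) k) (x y : Fin 3 → k)
    (h : ∀ j, Mᵀ j ∈ Submodule.span k ({x, y} : Set (Fin 3 → k))) : M.rank ≤ 2 := by
  classical
  rw [rank_eq_finrank_span_cols]
  have h1 : span k (Set.range Mᵀ) ≤ span k ({x, y} : Set (Fin 3 → k)) :=
    span_le.mpr (Set.range_subset_iff.mpr h)
  refine (Submodule.finrank_mono h1).trans ?_
  have hset : ({x, y} : Set (Fin 3 → k)) = Set.range ![x, y] := by
    ext z; simp [Fin.exists_fin_two, eq_comm]; tauto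
  rw [hset]
  refine (finrank_span_le_card _).trans ?_
  rw [Set.toFinset_range]
  exact Finset.card_image_le.trans (by simp)

lemma minor_det_zero_aux {k : Type*} [Field k] (M : Matrix (Fin 3) (Fin 4) k)
    (hM : M.rank ≤ 2) (g : Fin 3 → Fin 4) : (M.submatrix id g).det = 0 := by
  by_contra h
  have hU : IsUnit (M.submatrix id g) :=
    (Matrix.isUnit_iff_isUnit_det _).mpr (isUnit_iff_ne_zero.mpr h)
  have hli : LinearIndependent k (fun j => (M.submatrix id g)ᵀ j) :=
    Matrix.linearIndependent_cols_iff_isUnit.mpr hU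
  have heq : (fun j => (M.submatrix id g)ᵀ j) = fun j => Mᵀ (g j) := rfl
  rw [heq] at hli
  have h3 : 3 ≤ M.rank := by
    rw [rank_eq_finrank_span_cols]
    have hsub : Set.range (fun j => Mᵀ (g j)) ⊆ Set.range Mᵀ := by
      rintro x ⟨i, rfl⟩; exact ⟨g i, rfl⟩
    calc (3 : ℕ) = finrank k (span k (Set.range fun j => Mᵀ (g j))) := by
          rw [finrank_span_eq_card hli]; simp
      _ ≤ finrank k (span k (Set.range Mᵀ)) := Submodule.finrank_mono (span_mono hsub)
  omega

/-- **Singular points of the Poncelet incidence curve.**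
For smooth conics `C_A`, `C_B` and a point `(c, d)` of the incidence curve
`E = {(c,d) ∈ C_A × C_B : c ∈ T_d C_B}` in an affine chart, the Jacobian matrix `J` of the
defining equations has rank `≥ 2`, and rank exactly `2` if and only if `c = d` is a point
at which the two conics are tangent. -/
theorem jacobian_rank_incidence_curve {k : Type*} [Field k] [IsAlgClosed k]
    (hchar : (2 : k) ≠ 0)
    (A B : Matrix (Fin 3) (Fin 3) k) (hA : A.IsSymm) (hB : B.IsSymm)
    (hAinv : IsUnit A.det) (hBinv : IsUnit B.det)
    (c₁ c₂ d₁ d₂ : k) (c d : Fin 3 → k)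
    (hc : c = ![c₁, c₂, 1]) (hd : d = ![d₁, d₂, 1])
    (hcA : c ⬝ᵥ A.mulVec c = 0) (hdB : d ⬝ᵥ B.mulVec d = 0)
    (hcBd : c ⬝ᵥ B.mulVec d = 0)
    (J : Matrix (Fin 3) (Fin 4) k)
    (hJ : J = !![A.mulVec c 0, A.mulVec c 1, 0, 0;
                 0, 0, B.mulVec d 0, B.mulVec d 1;
                 B.mulVec d 0, B.mulVec d 1, B.mulVec c 0, B.mulVec c 1]) :
    2 ≤ J.rank ∧
    (J.rank = 2 ↔ (c = d ∧ ¬ LinearIndependent k ![A.mulVec c, B.mulVec c])) := by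
  set u := A.mulVec c with hu
  set v := B.mulVec d with hv
  set w := B.mulVec c with hw
  -- scalar forms of the hypotheses
  have hdw : d ⬝ᵥ w = 0 := by
    rw [hw, dotProduct_mulVec, ← mulVec_transpose, hB.eq, ← hv, dotProduct_comm]
    exact hcBd
  simp only [hc, hd, dotProduct, Fin.sum_univ_three, Matrix.cons_val_zero, Matrix.cons_val_one,
    Matrix.head_cons, one_mul, Matrix.cons_val_two, Matrix.tail_cons] at hcA hdB hcBd hdw
  -- nonvanishing facts
  have hAinj : Function.Injective A.mulVec :=
    mulVec_injective_iff_isUnit.mpr ((Matrix.isUnit_iff_isUnit_det A).mpr hAinv)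
  have hBinj : Function.Injective B.mulVec :=
    mulVec_injective_iff_isUnit.mpr ((Matrix.isUnit_iff_isUnit_det B).mpr hBinv)
  have hcne : c ≠ 0 := by
    rw [hc]; intro h; have := congrFun h 2; simp at this
  have hdne : d ≠ 0 := by
    rw [hd]; intro h; have := congrFun h 2; simp at this
  have hune : u ≠ 0 := fun h => hcne (hAinj (h.trans (A.mulVec_zero).symm))
  have hvne : v ≠ 0 := fun h => hdne (hBinj (h.trans (B.mulVec_zero).symm))
  have hwne : w ≠ 0 := fun h => hcne (hBinj (h.trans (B.mulVec_zero).symm))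
  have hu01 : u 0 ≠ 0 ∨ u 1 ≠ 0 := by
    by_contra h
    push_neg at h
    obtain ⟨h0, h1⟩ := h
    refine hune (funext fun i => ?_)
    have h2 : u 2 = 0 := by rw [h0, h1] at hcA; linear_combination hcA
    fin_cases i <;> simpa [h0, h1, h2]
  have hv01 : v 0 ≠ 0 ∨ v 1 ≠ 0 := by
    by_contra h
    push_neg at h
    obtain ⟨h0, h1⟩ := h
    refine hvne (funext fun i => ?_)
    have h2 : v 2 = 0 := by rw [h0, h1] at hdB; linear_combination hdB
    fin_cases i <;> simpa [h0, h1, h2]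
  have hw01 : w 0 ≠ 0 ∨ w 1 ≠ 0 := by
    by_contra h
    push_neg at h
    obtain ⟨h0, h1⟩ := h
    refine hwne (funext fun i => ?_)
    have h2 : w 2 = 0 := by rw [h0, h1] at hdw; linear_combination hdw
    fin_cases i <;> simpa [h0, h1, h2]
  -- part 1 : rank at least 2
  have h2le : 2 ≤ J.rank := by
    rcases hu01 with h0 | h0 <;> rcases hv01 with h1 | h1
    · exact two_le_rank_aux J 0 2 (by simpa [hJ]) (by simp [hJ]) (by simp [hJ]) (by simpa [hJ])
    · exact two_le_rank_aux J 0 3 (by simpa [hJ]) (by simp [hJ]) (by simp [hJ]) (by simpa [hJ])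
    · exact two_le_rank_aux J 1 2 (by simpa [hJ]) (by simp [hJ]) (by simp [hJ]) (by simpa [hJ])
    · exact two_le_rank_aux J 1 3 (by simpa [hJ]) (by simp [hJ]) (by simp [hJ]) (by simpa [hJ])
  refine ⟨h2le, ⟨fun hr2 => ?_, fun ⟨hcd, hdep⟩ => ?_⟩⟩
  · -- forward direction
    have hr2le : J.rank ≤ 2 := le_of_eq hr2
    have m1 := minor_det_zero_aux J hr2le ![0, 1, 2]
    have m2 := minor_det_zero_aux J hr2le ![0, 1, 3]
    have m3 := minor_det_zero_aux J hr2le ![0, 2, 3]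
    have m4 := minor_det_zero_aux J hr2le ![1, 2, 3]
    simp [hJ, Matrix.det_fin_three, Matrix.submatrix_apply] at m1 m2 m3 m4
    have hcross1 : u 0 * v 1 = u 1 * v 0 := by
      rcases hv01 with h | h
      · have hz : v 0 * (u 1 * v 0 - u 0 * v 1) = 0 := by linear_combination m1
        rcases mul_eq_zero.mp hz with h' | h'
        · exact absurd h' h
        · exact (sub_eq_zero.mp h').symm
      · have hz : v 1 * (u 1 * v 0 - u 0 * v 1) = 0 := by linear_combination m2
        rcases mul_eq_zero.mp hz with h' | h'
        · exact absurd h' h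
        · exact (sub_eq_zero.mp h').symm
    have hcross2 : v 0 * w 1 = v 1 * w 0 := by
      rcases hu01 with h | h
      · have hz : u 0 * (v 0 * w 1 - v 1 * w 0) = 0 := by linear_combination m3
        rcases mul_eq_zero.mp hz with h' | h'
        · exact absurd h' h
        · exact sub_eq_zero.mp h'
      · have hz : u 1 * (v 0 * w 1 - v 1 * w 0) = 0 := by linear_combination m4
        rcases mul_eq_zero.mp hz with h' | h'
        · exact absurd h' h
        · exact sub_eq_zero.mp h'
    obtain ⟨α, ha0, ha1⟩ : ∃ α, u 0 = α * v 0 ∧ u 1 = α * v 1 := by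
      rcases hv01 with h | h
      · refine ⟨u 0 / v 0, by field_simp, ?_⟩
        field_simp
        linear_combination -hcross1
      · refine ⟨u 1 / v 1, ?_, by field_simp⟩
        field_simp
        linear_combination hcross1
    obtain ⟨β, hb0, hb1⟩ : ∃ β, w 0 = β * v 0 ∧ w 1 = β * v 1 := by
      rcases hv01 with h | h
      · refine ⟨w 0 / v 0, by field_simp, ?_⟩
        field_simp
        linear_combination hcross2
      · refine ⟨w 1 / v 1, ?_, by field_simp⟩
        field_simp
        linear_combination -hcross2
    have hb2 : w 2 = β * v 2 := by
      linear_combination hdw - β * hdB - d₁ * hb0 - d₂ * hb1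
    have hwv : w = β • v := by
      funext i; fin_cases i
      · simpa using hb0
      · simpa using hb1
      · simpa using hb2
    have hcd : c = β • d := by
      apply hBinj
      rw [Matrix.mulVec_smul, ← hv, ← hw]
      exact hwv
    have hβ : β = 1 := by
      have h2 := congrFun hcd 2
      simp [hc, hd] at h2
      exact h2.symm
    have hcd' : c = d := by rw [hβ, one_smul] at hcd; exact hcd
    have hvw : v = w := by rw [hv, hw, hcd']
    have ha2 : u 2 = α * v 2 := by
      linear_combination hcA - α * hcBd - c₁ * ha0 - c₂ * ha1
    have huv : u = α • v := by
      funext i; fin_cases i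
      · simpa using ha0
      · simpa using ha1
      · simpa using ha2
    refine ⟨hcd', Fintype.not_linearIndependent_iff.mpr ⟨![1, -α], ?_, 0, by norm_num⟩⟩
    have hzero : (1 : k) • u + (-α) • w = 0 := by
      rw [one_smul, huv, hvw]
      funext i
      simp
    simpa [Fin.sum_univ_two] using hzero
  · -- backward direction
    have hvw : v = w := by rw [hv, hw, hcd]
    obtain ⟨g, hsum, i, hgi⟩ := Fintype.not_linearIndependent_iff.mp hdep
    have hsum' : g 0 • u + g 1 • w = 0 := by
      simpa [Fin.sum_univ_two] using hsum
    have hg0 : g 0 ≠ 0 := by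
      intro h
      have h1 : g 1 • w = 0 := by rw [h] at hsum'; simpa using hsum'
      have hg1 : g 1 = 0 := by
        rcases smul_eq_zero.mp h1 with h' | h'
        · exact h'
        · exact absurd h' hwne
      fin_cases i
      · exact hgi h
      · exact hgi hg1
    set α := -(g 1) / (g 0) with hα
    have hua : ∀ j, u j = α * w j := by
      intro j
      have hj := congrFun hsum' j
      simp only [Pi.add_apply, Pi.smul_apply, smul_eq_mul, Pi.zero_apply] at hj
      rw [hα]
      field_simp
      linear_combination hj
    refine le_antisymm (rank_le_two_aux J ![α, 0, 1] ![0, 1, 1] ?_) h2le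
    intro j
    fin_cases j
    · have hcol : Jᵀ 0 = w 0 • ![α, 0, 1] := by
        funext i; fin_cases i
        · simpa [hJ] using (hua 0).trans (mul_comm _ _)
        · simp [hJ]
        · simpa [hJ] using (congrFun hvw 0)
      show Jᵀ 0 ∈ _
      rw [hcol]; exact smul_mem _ _ (subset_span (by simp))
    · have hcol : Jᵀ 1 = w 1 • ![α, 0, 1] := by
        funext i; fin_cases i
        · simpa [hJ] using (hua 1).trans (mul_comm _ _)
        · simp [hJ]
        · simpa [hJ] using (congrFun hvw 1)
      show Jᵀ 1 ∈ _
      rw [hcol]; exact smul_mem _ _ (subset_span (by simp))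
    · have hcol : Jᵀ 2 = w 0 • ![0, 1, 1] := by
        funext i; fin_cases i
        · simp [hJ]
        · simpa [hJ] using (congrFun hvw 0)
        · simp [hJ]
      show Jᵀ 2 ∈ _
      rw [hcol]; exact smul_mem _ _ (subset_span (by simp))
    · have hcol : Jᵀ 3 = w 1 • ![0, 1, 1] := by
        funext i; fin_cases i
        · simp [hJ]
        · simpa [hJ] using (congrFun hvw 1)
        · simp [hJ]
      show Jᵀ 3 ∈ _
      rw [hcol]; exact smul_mem _ _ (subset_span (by simp))
end

section
/- Let A and B be invertible symmetric 3×3 matrices over k. Let c₁, c₂, d₁, d₂ ∈ k³ ∖ {0} satisfy: cᵢᵀA cᵢ = 0 and dᵢᵀB dᵢ = 0 for i = 1, 2; c₁ᵀB d₁ = 0; c₂ᵀB d₁ = 0; every nonzero x ∈ k³ with xᵀAx = 0 and xᵀB d₁ = 0 is a scalar multiple of c₁ or of c₂; c₂ᵀB d₂ = 0; and every nonzero y ∈ k³ with yᵀBy = 0 and c₂ᵀB y = 0 is a scalar multiple of d₁ or of d₂. Then (c₂ is a scalar multiple of c₁ and d₂ is a scalar multiple of d₁) if and only if (d₁ is a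 scalar multiple of c₁ and the vectors Ac₁ and Bc₁ are linearly dependent, i.e., the conics C_A and C_B are tangent at [c₁]). -/
/-!
Over a field of characteristic `≠ 2`, a line through a point `p` of a conic that meets the conic
nowhere else is the tangent at `p`, and on a smooth conic the tangent at `p` meets the conic only
at `p`. If the step fixes `([c₁], [d₁])`, the line `c₂ᵀ B y = 0` meets `C_B` only at `[d₁]`, so it
is the tangent there and `[d₁] = [c₂] = [c₁]`; the line `xᵀ B d₁ = 0`, i.e. the tangent to `C_B`
at `[c₁]`, then meets `C_A` only at `[c₁]`, so it is also the tangent to `C_A` there. Conversely,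
at a common tangency point both lines of the step are the common tangent, which meets each conic
only at `[c₁]`.
-/

open Matrix

section

variable {k : Type*} [Field k]

theorem Matrix.IsSymm.vecMul_eq_mulVec {n : Type*} [Fintype n] {M : Matrix n n k}
    (hM : M.IsSymm) (x : n → k) : x ᵥ* M = M *ᵥ x := by
  rw [← mulVec_transpose, hM.eq]

theorem Matrix.IsSymm.dotProduct_mulVec_comm {n : Type*} [Fintype n] {M : Matrix n n k}
    (hM : M.IsSymm) (x y : n → k) : x ⬝ᵥ M *ᵥ y = y ⬝ᵥ M *ᵥ x := by
  rw [dotProduct_mulVec, hM.vecMul_eq_mulVec, dotProduct_comm]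

theorem exists_eq_smul_of_dotProduct_eq_zero_imp {n : Type*} [Fintype n]
    {v w : n → k} (h : ∀ z, w ⬝ᵥ z = 0 → v ⬝ᵥ z = 0) : ∃ t : k, v = t • w := by
  classical
  have hker : ⨅ _ : Unit, LinearMap.ker (dotProductBilin k k w) ≤
      LinearMap.ker (dotProductBilin k k v) := fun z hz => by
    simp only [Submodule.mem_iInf, LinearMap.mem_ker, dotProductBilin_apply_apply] at hz ⊢
    exact h z (hz ())
  obtain ⟨t, ht⟩ := Submodule.mem_span_singleton.mp
    (by simpa [Set.range_const] using mem_span_of_iInf_ker_le_ker hker)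
  refine ⟨t, funext fun i => ?_⟩
  simpa using (LinearMap.congr_fun ht (Pi.single i 1)).symm

theorem exists_eq_smul_of_not_linearIndependent_pair {V : Type*} [AddCommGroup V] [Module k V]
    {u v : V} (h : ¬ LinearIndependent k ![u, v]) (hv : v ≠ 0) : ∃ t : k, u = t • v := by
  simp only [linearIndependent_fin2, Matrix.cons_val_one, Matrix.cons_val_zero, ne_eq, hv,
    not_false_eq_true, true_and, not_forall, not_not] at h
  obtain ⟨t, ht⟩ := h
  exact ⟨t, ht.symm⟩

theorem exists_eq_smul_crossProduct_of_dotProduct_eq_zero {u x y : Fin 3 → k}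
    (hxy : x ⨯₃ y ≠ 0) (hx : u ⬝ᵥ x = 0) (hy : u ⬝ᵥ y = 0) : ∃ t : k, u = t • x ⨯₃ y := by
  refine exists_eq_smul_of_not_linearIndependent_pair (fun hli => ?_) hxy
  apply crossProduct_ne_zero_iff_linearIndependent.mpr hli
  rw [cross_cross_eq_smul_sub_smul', hy, dotProduct_comm, hx, zero_smul, zero_smul, sub_zero]

/-- Otherwise the form vanishes on the plane spanned by `x` and `p`, so `M x` and `M p` are both
multiples of `x ⨯₃ p`, contradicting the invertibility of `M`. -/
theorem exists_eq_smul_of_mem_tangent {M : Matrix (Fin 3) (Fin 3) k} (hM : M.IsSymm)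
    (hMdet : IsUnit M.det) {x p : Fin 3 → k} (hp : p ≠ 0) (hxx : x ⬝ᵥ M *ᵥ x = 0)
    (hpp : p ⬝ᵥ M *ᵥ p = 0) (hxp : x ⬝ᵥ M *ᵥ p = 0) : ∃ s : k, x = s • p := by
  refine exists_eq_smul_of_not_linearIndependent_pair (fun hli => ?_) hp
  have hMinj : Function.Injective M.mulVecLin :=
    mulVec_injective_iff_isUnit.mpr ((isUnit_iff_isUnit_det M).mpr hMdet)
  have hMli : LinearIndependent k ![M *ᵥ x, M *ᵥ p] := by
    have := hli.map' M.mulVecLin (LinearMap.ker_eq_bot.mpr hMinj)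
    rwa [show ⇑M.mulVecLin ∘ ![x, p] = ![M *ᵥ x, M *ᵥ p] by ext i : 1; fin_cases i <;> rfl]
      at this
  have hxp' : p ⬝ᵥ M *ᵥ x = 0 := by rw [hM.dotProduct_mulVec_comm]; exact hxp
  have hcross : x ⨯₃ p ≠ 0 := crossProduct_ne_zero_iff_linearIndependent.mpr hli
  obtain ⟨a, ha⟩ := exists_eq_smul_crossProduct_of_dotProduct_eq_zero (u := M *ᵥ x) hcross
    (by rwa [dotProduct_comm]) (by rwa [dotProduct_comm])
  obtain ⟨b, hb⟩ := exists_eq_smul_crossProduct_of_dotProduct_eq_zero (u := M *ᵥ p) hcross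
    (by rwa [dotProduct_comm]) (by rwa [dotProduct_comm])
  apply crossProduct_ne_zero_iff_linearIndependent.mpr hMli
  simp only [ha, hb, LinearMap.map_smul, LinearMap.smul_apply, cross_self, smul_zero]

/-- The line `w ⬝ᵥ y = 0` is the tangent at `p`: otherwise, for a point `z` of the line with
`p ⬝ᵥ M *ᵥ z ≠ 0`, the form restricted to `α • p + z` is linear in `α` (it vanishes at `p`), and
its root gives a second intersection point. -/
theorem exists_vecMul_eq_smul_of_forall_mem_line_eq_smul {n : Type*} [Fintype n]
    {M : Matrix n n k} (hM : M.IsSymm) (h2 : (2 : k) ≠ 0) {w p : n → k}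
    (hpp : p ⬝ᵥ M *ᵥ p = 0) (hwp : w ⬝ᵥ p = 0)
    (honly : ∀ y, y ⬝ᵥ M *ᵥ y = 0 → w ⬝ᵥ y = 0 → ∃ s : k, y = s • p) :
    ∃ t : k, p ᵥ* M = t • w := by
  refine exists_eq_smul_of_dotProduct_eq_zero_imp fun z hz => ?_
  rw [← dotProduct_mulVec]
  by_contra hpz
  obtain ⟨α, hα⟩ : ∃ α : k, 2 * α * (p ⬝ᵥ M *ᵥ z) + z ⬝ᵥ M *ᵥ z = 0 :=
    ⟨-(z ⬝ᵥ M *ᵥ z) / (2 * (p ⬝ᵥ M *ᵥ z)), by field_simp; ring⟩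
  have hquad : (α • p + z) ⬝ᵥ M *ᵥ (α • p + z) = 0 := by
    simp only [mulVec_add, mulVec_smul, dotProduct_add, add_dotProduct, dotProduct_smul,
      smul_dotProduct, smul_eq_mul, hpp, hM.dotProduct_mulVec_comm z p]
    linear_combination hα
  obtain ⟨s, hs⟩ := honly _ hquad (by simp [dotProduct_add, hwp, hz])
  have hzp : z = (s - α) • p := by rw [sub_smul, ← hs]; abel
  exact hpz (by rw [hzp, mulVec_smul, dotProduct_smul, hpp, smul_zero])

theorem exists_eq_smul_of_ne_zero_imp_or {V : Type*} [AddCommGroup V] [Module k V] {y a : V}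
    {t : k} (h : y ≠ 0 → (∃ s : k, y = s • a) ∨ ∃ s : k, y = s • t • a) :
    ∃ s : k, y = s • a := by
  rcases eq_or_ne y 0 with rfl | hy
  · exact ⟨0, (zero_smul k a).symm⟩
  rcases h hy with h | ⟨s, rfl⟩
  · exact h
  · exact ⟨s * t, smul_smul s t a⟩

end

theorem poncelet_step_fixed_point_iff_tangent_general {k : Type*} [Field k]
    (hchar : (2 : k) ≠ 0)
    (A B : Matrix (Fin 3) (Fin 3) k) (hA : A.IsSymm) (hB : B.IsSymm)
    (hAinv : IsUnit A.det) (hBinv : IsUnit B.det)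
    (c₁ c₂ d₁ d₂ : Fin 3 → k)
    (hc₁ : c₁ ≠ 0) (hc₂ : c₂ ≠ 0) (hd₁ : d₁ ≠ 0)
    (hc₁A : c₁ ⬝ᵥ A.mulVec c₁ = 0) (hc₂A : c₂ ⬝ᵥ A.mulVec c₂ = 0)
    (hd₁B : d₁ ⬝ᵥ B.mulVec d₁ = 0) (hd₂B : d₂ ⬝ᵥ B.mulVec d₂ = 0)
    (h₁ : c₁ ⬝ᵥ B.mulVec d₁ = 0)
    (h₂ : c₂ ⬝ᵥ B.mulVec d₁ = 0)
    (h₃ : ∀ x : Fin 3 → k, x ≠ 0 → x ⬝ᵥ A.mulVec x = 0 → x ⬝ᵥ B.mulVec d₁ = 0 →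
      (∃ s : k, x = s • c₁) ∨ (∃ s : k, x = s • c₂))
    (h₄ : c₂ ⬝ᵥ B.mulVec d₂ = 0)
    (h₅ : ∀ y : Fin 3 → k, y ≠ 0 → y ⬝ᵥ B.mulVec y = 0 → c₂ ⬝ᵥ B.mulVec y = 0 →
      (∃ s : k, y = s • d₁) ∨ (∃ s : k, y = s • d₂)) :
    ((∃ s : k, c₂ = s • c₁) ∧ (∃ s : k, d₂ = s • d₁)) ↔
      ((∃ s : k, d₁ = s • c₁) ∧ ¬ LinearIndependent k ![A.mulVec c₁, B.mulVec c₁]) := by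
  have hBinj : Function.Injective B.vecMul := vecMul_injective_iff_isUnit.mpr
    ((isUnit_iff_isUnit_det B).mpr hBinv)
  constructor
  · rintro ⟨⟨s, rfl⟩, ⟨t, rfl⟩⟩
    obtain ⟨τ, hτ⟩ := exists_vecMul_eq_smul_of_forall_mem_line_eq_smul hB hchar hd₁B
      (w := (s • c₁) ᵥ* B) (by rwa [← dotProduct_mulVec]) fun y hyy hy =>
        exists_eq_smul_of_ne_zero_imp_or fun hy0 => h₅ y hy0 hyy (by rwa [dotProduct_mulVec])
    have hd₁c₁ : d₁ = (τ * s) • c₁ := hBinj (show d₁ ᵥ* B = ((τ * s) • c₁) ᵥ* B by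
      rw [hτ, smul_vecMul, smul_vecMul, smul_smul])
    obtain ⟨τ', hτ'⟩ := exists_vecMul_eq_smul_of_forall_mem_line_eq_smul hA hchar hc₁A
      (w := B *ᵥ d₁) (by rwa [dotProduct_comm]) fun x hxx hx =>
        exists_eq_smul_of_ne_zero_imp_or fun hx0 => h₃ x hx0 hxx (by rwa [dotProduct_comm])
    refine ⟨⟨τ * s, hd₁c₁⟩, fun hli => (linearIndependent_fin2.mp hli).2 (τ' * (τ * s)) ?_⟩
    simp only [Matrix.cons_val_one, Matrix.cons_val_zero]
    rw [← hA.vecMul_eq_mulVec, hτ', hd₁c₁, mulVec_smul, smul_smul]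
  · rintro ⟨⟨r, rfl⟩, hdep⟩
    have hr : r ≠ 0 := by rintro rfl; exact hd₁ (zero_smul k c₁)
    have hBc₁ : B *ᵥ c₁ ≠ 0 := fun h => hc₁ (hBinj (show c₁ ᵥ* B = 0 ᵥ* B by
      rw [hB.vecMul_eq_mulVec, h, zero_vecMul]))
    obtain ⟨μ, hμ⟩ := exists_eq_smul_of_not_linearIndependent_pair hdep hBc₁
    have hc₂Bc₁ : c₂ ⬝ᵥ B *ᵥ c₁ = 0 := by
      simpa [mulVec_smul, hr] using h₂
    obtain ⟨σ, rfl⟩ := exists_eq_smul_of_mem_tangent hA hAinv hc₁ hc₂A hc₁A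
      (by rw [hμ, dotProduct_smul, hc₂Bc₁, smul_zero])
    have hσ : σ ≠ 0 := by rintro rfl; exact hc₂ (zero_smul k c₁)
    have hc₁Bd₂ : c₁ ⬝ᵥ B *ᵥ d₂ = 0 := by simpa [hσ] using h₄
    refine ⟨⟨σ, rfl⟩, exists_eq_smul_of_mem_tangent hB hBinv hd₁ hd₂B hd₁B ?_⟩
    rw [mulVec_smul, dotProduct_smul, hB.dotProduct_mulVec_comm, hc₁Bd₂, smul_zero]

/-- **Fixed points of the Poncelet step map are the tangency points.**
If `([c₂],[d₂])` is the image of `([c₁],[d₁])` under one step of the Poncelet process for the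
smooth conics `C_A` and `C_B`, then the step fixes the point (projectively) if and only if
`[c₁] = [d₁]` is a point at which `C_A` and `C_B` are tangent. -/
theorem poncelet_step_fixed_point_iff_tangent {k : Type*} [Field k] [IsAlgClosed k]
    (hchar : (2 : k) ≠ 0)
    (A B : Matrix (Fin 3) (Fin 3) k) (hA : A.IsSymm) (hB : B.IsSymm)
    (hAinv : IsUnit A.det) (hBinv : IsUnit B.det)
    (c₁ c₂ d₁ d₂ : Fin 3 → k)
    (hc₁ : c₁ ≠ 0) (hc₂ : c₂ ≠ 0) (hd₁ : d₁ ≠ 0) (hd₂ : d₂ ≠ 0)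
    (hc₁A : c₁ ⬝ᵥ A.mulVec c₁ = 0) (hc₂A : c₂ ⬝ᵥ A.mulVec c₂ = 0)
    (hd₁B : d₁ ⬝ᵥ B.mulVec d₁ = 0) (hd₂B : d₂ ⬝ᵥ B.mulVec d₂ = 0)
    (h₁ : c₁ ⬝ᵥ B.mulVec d₁ = 0)
    (h₂ : c₂ ⬝ᵥ B.mulVec d₁ = 0)
    (h₃ : ∀ x : Fin 3 → k, x ≠ 0 → x ⬝ᵥ A.mulVec x = 0 → x ⬝ᵥ B.mulVec d₁ = 0 →
      (∃ s : k, x = s • c₁) ∨ (∃ s : k, x = s • c₂))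
    (h₄ : c₂ ⬝ᵥ B.mulVec d₂ = 0)
    (h₅ : ∀ y : Fin 3 → k, y ≠ 0 → y ⬝ᵥ B.mulVec y = 0 → c₂ ⬝ᵥ B.mulVec y = 0 →
      (∃ s : k, y = s • d₁) ∨ (∃ s : k, y = s • d₂)) :
    ((∃ s : k, c₂ = s • c₁) ∧ (∃ s : k, d₂ = s • d₁)) ↔
      ((∃ s : k, d₁ = s • c₁) ∧ ¬ LinearIndependent k ![A.mulVec c₁, B.mulVec c₁]) :=
  poncelet_step_fixed_point_iff_tangent_general hchar A B hA hB hAinv hBinv c₁ c₂ d₁ d₂ hc₁ hc₂ hd₁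
    hc₁A hc₂A hd₁B hd₂B h₁ h₂ h₃ h₄ h₅
end

section
/- Let P ∈ k[u₀, u₁, v₀, v₁] be a nonzero polynomial that is bihomogeneous of bidegree (2,2), i.e., homogeneous of degree 2 in the variables (u₀, u₁) and homogeneous of degree 2 in the variables (v₀, v₁). Suppose there is no pair (u, v) with u ∈ k² ∖ {0} and v ∈ k² ∖ {0} at which all four partial derivatives ∂P/∂u₀, ∂P/∂u₁, ∂P/∂v₀, ∂P/∂v₁ vanish simultaneously (i.e., the curve {P = 0} ⊆ ℙ¹ × ℙ¹ is smooth). Then P is irreducible in k[u₀, u₁, v₀, v₁], i.e., P is not a product of two nonconstant polynomials. -/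
/-!
If `P = P₁ * P₂` with both factors nonconstant, the factors are again bihomogeneous, of bidegrees
`(a, b)` and `(a', b')` with `a + a' = b + b' = 2`: the substitution `X i ↦ t ^ w i * X i` turns a
weighted homogeneous polynomial into a monomial in `t`, and the factors of a monomial are monomials.
Two such forms always have a common zero in `(k² ∖ 0) × (k² ∖ 0)`: if one of them has degree `0`
in one set of variables, take a root of one binary form and then one of the other; in the bilinear
case pick `v` on which the binary quadratic `det` of the two linear forms in `u` vanishes, and then
a common root `u`.
By the Leibniz rule every partial derivative of `P₁ * P₂` vanishes at a common zero of the factors,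
so the curve would be singular there.
-/

open MvPolynomial

namespace Polynomial

theorem coeff_eq_zero_of_mul_eq_monomial {R : Type*} [Semiring R] [NoZeroDivisors R]
    {p q : R[X]} {n : ℕ} {c : R} (hc : c ≠ 0) (h : p * q = monomial n c) {j : ℕ}
    (hj : j ≠ p.natDegree) : p.coeff j = 0 := by
  have hpq : p * q ≠ 0 := by rwa [h, Ne, monomial_eq_zero_iff]
  have hp : p ≠ 0 := left_ne_zero_of_mul hpq
  have hq : q ≠ 0 := right_ne_zero_of_mul hpq
  have hdeg : p.natDegree + q.natDegree = n := by
    rw [← natDegree_mul hp hq, h, natDegree_monomial_eq _ hc]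
  have htrail : p.natTrailingDegree + q.natTrailingDegree = n := by
    rw [← natTrailingDegree_mul hp hq, h, natTrailingDegree_monomial hc]
  have hp_le := natTrailingDegree_le_natDegree p
  have hq_le := natTrailingDegree_le_natDegree q
  rcases hj.lt_or_gt with hj | hj
  · exact coeff_eq_zero_of_lt_natTrailingDegree (by omega)
  · exact coeff_eq_zero_of_natDegree_lt hj

end Polynomial

namespace MvPolynomial

section Substitution

variable {σ τ R M : Type*} [CommSemiring R] [AddCommMonoid M]

theorem IsWeightedHomogeneous.bind₁ {w : σ → M} {w' : τ → M} {Q : MvPolynomial σ R} {n : M}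
    (hQ : Q.IsWeightedHomogeneous w n) {g : σ → MvPolynomial τ R}
    (hg : ∀ i, (g i).IsWeightedHomogeneous w' (w i)) :
    (bind₁ g Q).IsWeightedHomogeneous w' n := by
  rw [Q.as_sum, map_sum]
  refine IsWeightedHomogeneous.sum _ _ _ fun d hd => ?_
  rw [bind₁_monomial, ← hQ (mem_support_iff.mp hd), Finsupp.weight_apply, Finsupp.sum]
  exact (IsWeightedHomogeneous.prod _ _ _ fun i _ => (hg i).pow (d i)).C_mul _

theorem IsWeightedHomogeneous.add_weight {w₁ w₂ : σ → M} {Q : MvPolynomial σ R} {m n : M}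
    (h₁ : Q.IsWeightedHomogeneous w₁ m) (h₂ : Q.IsWeightedHomogeneous w₂ n) :
    Q.IsWeightedHomogeneous (w₁ + w₂) (m + n) := fun d hd => by
  rw [← h₁ hd, ← h₂ hd]
  simp only [Finsupp.weight_apply, Pi.add_apply, smul_add, Finsupp.sum_add]

end Substitution

section WeightedScaling

variable {σ R : Type*} [CommSemiring R]

noncomputable def weightedScaling (w : σ → ℕ) :
    MvPolynomial σ R →ₐ[R] Polynomial (MvPolynomial σ R) :=
  aeval fun i => Polynomial.C (X i) * Polynomial.X ^ w i

theorem weightedScaling_monomial (w : σ → ℕ) (d : σ →₀ ℕ) (c : R) :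
    weightedScaling w (monomial d c) = Polynomial.monomial (d.weight w) (monomial d c) := by
  rw [weightedScaling, aeval_monomial, Finsupp.prod]
  simp only [mul_pow, Finset.prod_mul_distrib, ← pow_mul, Finset.prod_pow_eq_pow_sum]
  rw [← Polynomial.C_mul_X_pow_eq_monomial, monomial_eq, Finsupp.prod, map_mul, map_prod,
    Finsupp.weight_apply, Finsupp.sum, Polynomial.algebraMap_apply, algebraMap_eq]
  simp only [map_pow, smul_eq_mul, mul_comm (d _)]
  ring

theorem coeff_weightedScaling (w : σ → ℕ) (Q : MvPolynomial σ R) (n : ℕ) :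
    (weightedScaling w Q).coeff n = weightedHomogeneousComponent w n Q := by
  classical
  induction Q using MvPolynomial.induction_on' with
  | add p q hp hq => rw [map_add, Polynomial.coeff_add, hp, hq, map_add]
  | monomial d c =>
    have hd := isWeightedHomogeneous_monomial w d c rfl
    rw [weightedScaling_monomial, Polynomial.coeff_monomial]
    split_ifs with h
    · rw [← h, weightedHomogeneousComponent_eq_self hd]
    · rw [hd.weightedHomogeneousComponent_ne n (Ne.symm h)]

theorem weightedScaling_of_isWeightedHomogeneous {w : σ → ℕ} {Q : MvPolynomial σ R} {n : ℕ}
    (hQ : Q.IsWeightedHomogeneous w n) : weightedScaling w Q = Polynomial.monomial n Q := by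
  classical
  ext1 j
  rw [coeff_weightedScaling, Polynomial.coeff_monomial]
  split_ifs with hj
  · rw [← hj, weightedHomogeneousComponent_eq_self hQ]
  · exact hQ.weightedHomogeneousComponent_ne j (Ne.symm hj)

theorem isWeightedHomogeneous_of_coeff_weightedScaling {w : σ → ℕ} {Q : MvPolynomial σ R}
    {n : ℕ} (h : ∀ j ≠ n, (weightedScaling w Q).coeff j = 0) : Q.IsWeightedHomogeneous w n := by
  classical
  intro d hd
  by_contra hne
  have := congr_arg (coeff d) (h _ hne)
  rw [coeff_weightedScaling, coeff_weightedHomogeneousComponent, if_pos rfl, coeff_zero] at this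
  exact hd this

theorem IsWeightedHomogeneous.of_mul [IsDomain R] {w : σ → ℕ} {P₁ P₂ : MvPolynomial σ R} {n : ℕ}
    (h : (P₁ * P₂).IsWeightedHomogeneous w n) (h0 : P₁ * P₂ ≠ 0) :
    ∃ a b, a + b = n ∧ P₁.IsWeightedHomogeneous w a ∧ P₂.IsWeightedHomogeneous w b := by
  have hmul := weightedScaling_of_isWeightedHomogeneous h
  rw [map_mul] at hmul
  have h₁ : P₁.IsWeightedHomogeneous w (weightedScaling w P₁).natDegree :=
    isWeightedHomogeneous_of_coeff_weightedScaling fun j hj =>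
      Polynomial.coeff_eq_zero_of_mul_eq_monomial h0 hmul hj
  have h₂ : P₂.IsWeightedHomogeneous w (weightedScaling w P₂).natDegree :=
    isWeightedHomogeneous_of_coeff_weightedScaling fun j hj =>
      Polynomial.coeff_eq_zero_of_mul_eq_monomial h0 ((mul_comm _ _).trans hmul) hj
  exact ⟨_, _, (h₁.mul h₂).inj_right h0 h, h₁, h₂⟩

end WeightedScaling

end MvPolynomial

section BinaryForm

variable {k : Type*}

def IsBinaryForm [CommSemiring k] (f : (Fin 2 → k) → k) (n : ℕ) : Prop :=
  ∃ F : MvPolynomial (Fin 2) k, F.IsHomogeneous n ∧ f = fun x => eval x F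

namespace IsBinaryForm

theorem mul [CommSemiring k] {f g : (Fin 2 → k) → k} {m n : ℕ} (hf : IsBinaryForm f m)
    (hg : IsBinaryForm g n) : IsBinaryForm (f * g) (m + n) := by
  obtain ⟨F, hF, rfl⟩ := hf
  obtain ⟨G, hG, rfl⟩ := hg
  exact ⟨F * G, hF.mul hG, by ext; simp⟩

theorem sub [CommRing k] {f g : (Fin 2 → k) → k} {n : ℕ} (hf : IsBinaryForm f n)
    (hg : IsBinaryForm g n) : IsBinaryForm (f - g) n := by
  obtain ⟨F, hF, rfl⟩ := hf
  obtain ⟨G, hG, rfl⟩ := hg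
  exact ⟨F - G, hF.sub hG, by ext; simp⟩

theorem apply_eq_of_degree_zero [CommSemiring k] {f : (Fin 2 → k) → k} (hf : IsBinaryForm f 0)
    (x y : Fin 2 → k) : f x = f y := by
  obtain ⟨F, hF, rfl⟩ := hf
  rw [totalDegree_eq_zero_iff_eq_C.mp (Nat.le_zero.mp hF.totalDegree_le)]
  simp only [eval_C]

theorem apply_eq_of_degree_one [CommSemiring k] {f : (Fin 2 → k) → k} (hf : IsBinaryForm f 1)
    (x : Fin 2 → k) : f x = f ![1, 0] * x 0 + f ![0, 1] * x 1 := by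
  obtain ⟨F, hF, rfl⟩ := hf
  have hF' : F ∈ Submodule.span k (Set.range X) := by
    rw [← homogeneousSubmodule_one_eq_span_X]; exact hF
  clear hF
  induction hF' using Submodule.span_induction with
  | mem _ h => obtain ⟨i, rfl⟩ := h; fin_cases i <;> simp
  | zero => simp
  | add _ _ _ _ h₁ h₂ => simp only [map_add] at h₁ h₂ ⊢; rw [h₁, h₂]; ring
  | smul _ _ _ h => simp only [smul_eval, h]; ring

theorem exists_ne_zero_apply_eq_zero [Field k] [IsAlgClosed k] {f : (Fin 2 → k) → k} {n : ℕ}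
    (hf : IsBinaryForm f n) (hn : n ≠ 0) : ∃ x ≠ 0, f x = 0 := by
  obtain ⟨F, hF, rfl⟩ := hf
  set p : Polynomial k := aeval ![Polynomial.X, 1] F
  by_cases hp : 0 < p.degree
  · obtain ⟨t, ht⟩ := IsAlgClosed.exists_root p hp.ne'
    refine ⟨![t, 1], fun h => by simpa using congrFun h 1, ?_⟩
    have hFt := comp_aeval_apply (f := ![Polynomial.X, 1]) (Polynomial.aeval t) F
    have hpt : (fun i => Polynomial.eval t (![Polynomial.X, 1] i)) = ![t, 1] := by
      ext i; fin_cases i <;> simp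
    simp only [Polynomial.coe_aeval_eq_eval, hpt, aeval_eq_eval] at hFt
    exact hFt.symm.trans ht
  · have hFp : p.homogenize n = F := Polynomial.homogenize_eq_of_isHomogeneous hF rfl
    rw [Polynomial.eq_C_of_degree_le_zero (not_lt.mp hp), Polynomial.homogenize_C] at hFp
    refine ⟨![1, 0], fun h => by simpa using congrFun h 0, ?_⟩
    simp [← hFp, hn]

end IsBinaryForm

def IsBiform [CommSemiring k] (f : (Fin 2 → k) → (Fin 2 → k) → k) (a b : ℕ) : Prop :=
  (∀ v, IsBinaryForm (fun u => f u v) a) ∧ ∀ u, IsBinaryForm (f u) b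

namespace IsBiform

theorem flip [CommSemiring k] {f : (Fin 2 → k) → (Fin 2 → k) → k} {a b : ℕ}
    (hf : IsBiform f a b) : IsBiform (flip f) b a :=
  ⟨hf.2, hf.1⟩

variable [Field k] [IsAlgClosed k] {f g : (Fin 2 → k) → (Fin 2 → k) → k}

theorem exists_common_zero_of_right_degree_zero {a b : ℕ} (hf : ∀ u, IsBinaryForm (f u) b)
    (hb : b ≠ 0) (hg : IsBiform g a 0) (ha : a ≠ 0) :
    ∃ u v, u ≠ 0 ∧ v ≠ 0 ∧ f u v = 0 ∧ g u v = 0 := by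
  obtain ⟨u, hu, hgu⟩ := (hg.1 0).exists_ne_zero_apply_eq_zero ha
  obtain ⟨v, hv, hfv⟩ := (hf u).exists_ne_zero_apply_eq_zero hb
  exact ⟨u, v, hu, hv, hfv, ((hg.2 u).apply_eq_of_degree_zero v 0).trans hgu⟩

theorem exists_common_zero_of_bilinear (hf : IsBiform f 1 1) (hg : IsBiform g 1 1) :
    ∃ u v, u ≠ 0 ∧ v ≠ 0 ∧ f u v = 0 ∧ g u v = 0 := by
  have hdet : IsBinaryForm (f ![1, 0] * g ![0, 1] - f ![0, 1] * g ![1, 0]) 2 :=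
    ((hf.2 _).mul (hg.2 _)).sub ((hf.2 _).mul (hg.2 _))
  obtain ⟨v, hv, hdet_v⟩ := hdet.exists_ne_zero_apply_eq_zero two_ne_zero
  obtain ⟨u, hu, hMu⟩ := Matrix.exists_mulVec_eq_zero_iff.mpr
    (show (!![f ![1, 0] v, f ![0, 1] v; g ![1, 0] v, g ![0, 1] v]).det = 0 by
      rw [Matrix.det_fin_two_of]; simpa using hdet_v)
  refine ⟨u, v, hu, hv, ?_, ?_⟩
  · rw [(hf.1 v).apply_eq_of_degree_one u]
    simpa [Matrix.mulVec, dotProduct] using congrFun hMu 0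
  · rw [(hg.1 v).apply_eq_of_degree_one u]
    simpa [Matrix.mulVec, dotProduct] using congrFun hMu 1

theorem exists_common_zero {a b a' b' : ℕ} (hf : IsBiform f a b) (hg : IsBiform g a' b')
    (ha : a + a' = 2) (hb : b + b' = 2) (hf0 : a + b ≠ 0) (hg0 : a' + b' ≠ 0) :
    ∃ u v, u ≠ 0 ∧ v ≠ 0 ∧ f u v = 0 ∧ g u v = 0 := by
  rcases (by omega : b' = 0 ∨ b = 0 ∨ a' = 0 ∨ a = 0 ∨ (a = 1 ∧ b = 1 ∧ a' = 1 ∧ b' = 1))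
    with rfl | rfl | rfl | rfl | ⟨rfl, rfl, rfl, rfl⟩
  · exact exists_common_zero_of_right_degree_zero hf.2 (by omega) hg (by omega)
  · obtain ⟨u, v, hu, hv, hg', hf'⟩ :=
      exists_common_zero_of_right_degree_zero hg.2 (by omega) hf (by omega)
    exact ⟨u, v, hu, hv, hf', hg'⟩
  · obtain ⟨v, u, hv, hu, hf', hg'⟩ :=
      exists_common_zero_of_right_degree_zero hf.1 (by omega) hg.flip (by omega)
    exact ⟨u, v, hu, hv, hf', hg'⟩
  · obtain ⟨v, u, hv, hu, hg', hf'⟩ :=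
      exists_common_zero_of_right_degree_zero hg.1 (by omega) hf.flip (by omega)
    exact ⟨u, v, hu, hv, hf', hg'⟩
  · exact exists_common_zero_of_bilinear hf hg

end IsBiform

theorem isBinaryForm_eval_bind₁ [CommSemiring k] {σ : Type*} {w : σ → ℕ} {Q : MvPolynomial σ k}
    {n : ℕ} (hQ : Q.IsWeightedHomogeneous w n) (g : σ → MvPolynomial (Fin 2) k)
    (hg : ∀ i, (g i).IsHomogeneous (w i)) :
    IsBinaryForm (fun x => eval (fun i => eval x (g i)) Q) n :=
  ⟨bind₁ g Q, hQ.bind₁ hg, funext fun x => (eval₂Hom_bind₁ (RingHom.id k) x g Q).symm⟩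

theorem isBiform_eval [CommSemiring k] {Q : MvPolynomial (Fin 4) k} {a b : ℕ}
    (h₁ : Q.IsWeightedHomogeneous ![1, 1, 0, 0] a) (h₂ : Q.IsWeightedHomogeneous ![0, 0, 1, 1] b) :
    IsBiform (fun u v => eval ![u 0, u 1, v 0, v 1] Q) a b := by
  refine ⟨fun v => ?_, fun u => ?_⟩
  · have hv : (fun u : Fin 2 → k => eval ![u 0, u 1, v 0, v 1] Q) =
        fun u => eval (fun i => eval u (![X 0, X 1, C (v 0), C (v 1)] i)) Q := by
      funext u; exact congrArg (eval · Q) (funext fun i => by fin_cases i <;> simp)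
    rw [hv]
    refine isBinaryForm_eval_bind₁ h₁ _ fun i => ?_
    fin_cases i <;> simp [isHomogeneous_X, isHomogeneous_C]
  · show IsBinaryForm (fun v => eval ![u 0, u 1, v 0, v 1] Q) b
    have hu : (fun v : Fin 2 → k => eval ![u 0, u 1, v 0, v 1] Q) =
        fun v => eval (fun i => eval v (![C (u 0), C (u 1), X 0, X 1] i)) Q := by
      funext v; exact congrArg (eval · Q) (funext fun i => by fin_cases i <;> simp)
    rw [hu]
    refine isBinaryForm_eval_bind₁ h₂ _ fun i => ?_
    fin_cases i <;> simp [isHomogeneous_X, isHomogeneous_C]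

end BinaryForm

theorem MvPolynomial.isHomogeneous_of_bihomogeneous {R : Type*} [CommSemiring R]
    {Q : MvPolynomial (Fin 4) R} {a b : ℕ} (h₁ : Q.IsWeightedHomogeneous ![1, 1, 0, 0] a)
    (h₂ : Q.IsWeightedHomogeneous ![0, 0, 1, 1] b) : Q.IsHomogeneous (a + b) := by
  have hw : ![1, 1, 0, 0] + ![0, 0, 1, 1] = (1 : Fin 4 → ℕ) := by
    funext i; fin_cases i <;> rfl
  rw [IsHomogeneous, ← hw]
  exact h₁.add_weight h₂

theorem smooth_bidegree_two_two_irreducible_general {k : Type*} [Field k] [IsAlgClosed k]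
    (P : MvPolynomial (Fin 4) k)
    (h₁ : IsWeightedHomogeneous ![1, 1, 0, 0] P 2)
    (h₂ : IsWeightedHomogeneous ![0, 0, 1, 1] P 2)
    (hsmooth : ¬ ∃ (u v : Fin 2 → k), u ≠ 0 ∧ v ≠ 0 ∧
      ∀ i : Fin 4, eval ![u 0, u 1, v 0, v 1] (pderiv i P) = 0) :
    ∀ P₁ P₂ : MvPolynomial (Fin 4) k, P = P₁ * P₂ →
      P₁.totalDegree = 0 ∨ P₂.totalDegree = 0 := by
  rintro P₁ P₂ rfl
  by_contra! hdeg
  have h0 : P₁ * P₂ ≠ 0 := mul_ne_zero (fun h => hdeg.1 (by simp [h]))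
    (fun h => hdeg.2 (by simp [h]))
  obtain ⟨a, a', ha, ha₁, ha₂⟩ := h₁.of_mul h0
  obtain ⟨b, b', hb, hb₁, hb₂⟩ := h₂.of_mul h0
  have hd₁ := (isHomogeneous_of_bihomogeneous ha₁ hb₁).totalDegree_le
  have hd₂ := (isHomogeneous_of_bihomogeneous ha₂ hb₂).totalDegree_le
  obtain ⟨u, v, hu, hv, hz₁, hz₂⟩ := (isBiform_eval ha₁ hb₁).exists_common_zero
    (isBiform_eval ha₂ hb₂) ha hb (by omega) (by omega)
  exact hsmooth ⟨u, v, hu, hv, fun i => by simp [Derivation.leibniz, hz₁, hz₂]⟩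

/-- **A smooth bidegree (2,2) curve in ℙ¹ × ℙ¹ is irreducible.**
If `P` is a nonzero polynomial in `k[u₀,u₁,v₀,v₁]`, bihomogeneous of bidegree `(2,2)`, and
there is no point `(u, v)` with `u ≠ 0`, `v ≠ 0` at which all four partial derivatives of `P`
vanish, then `P` is not a product of two nonconstant polynomials. -/
theorem smooth_bidegree_two_two_irreducible {k : Type*} [Field k] [IsAlgClosed k]
    (hchar : (2 : k) ≠ 0)
    (P : MvPolynomial (Fin 4) k) (hP : P ≠ 0)
    (h₁ : IsWeightedHomogeneous ![1, 1, 0, 0] P 2)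
    (h₂ : IsWeightedHomogeneous ![0, 0, 1, 1] P 2)
    (hsmooth : ¬ ∃ (u v : Fin 2 → k), u ≠ 0 ∧ v ≠ 0 ∧
      ∀ i : Fin 4, eval ![u 0, u 1, v 0, v 1] (pderiv i P) = 0) :
    ∀ P₁ P₂ : MvPolynomial (Fin 4) k, P = P₁ * P₂ →
      P₁.totalDegree = 0 ∨ P₂.totalDegree = 0 :=
  smooth_bidegree_two_two_irreducible_general P h₁ h₂ hsmooth
end

section
/- Let t, a, b ∈ k with b ≠ 0, and consider the conics C = {[x:y:z] ∈ ℙ²(k) : x² + txy + ay² − byz = 0} and D = {[x:y:z] ∈ ℙ²(k) : x² − yz = 0}, which are tangent at [0:0:1]. Set Δ = t² − 4a(1−b). Then the set C ∩ D has exactly 3 points if b ≠ 1 and Δ ≠ 0; exactly 2 points if b ≠ 1 and Δ = 0; exactly 2 points if b = 1 and t ≠ 0; and exactly 1 point if b = 1, t = 0, and a ≠ 0. -/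
/-!
The conic `D : x² = yz` is rational: it consists of `[0:0:1]` and the points `[x:1:x²]`,
`x ∈ k`. The point `[0:0:1]` lies on `C`, and `[x:1:x²]` lies on `C` exactly when
`(1 - b)x² + tx + a = 0`. Hence `|C ∩ D|` is one more than the number of distinct roots of this
polynomial in `k`, which is `2`, `1`, `1`, `0` in the four cases: by the discriminant `Δ` when
`b ≠ 1`, and because the polynomial is linear or a nonzero constant when `b = 1`.
-/

open Projectivization
open scoped LinearAlgebra.Projectivization

section Quadratic

variable {K : Type*} [Field K] {a b c : K}

theorem encard_setOf_quadratic_eq_zero_of_discrim_ne_zero [IsAlgClosed K] [NeZero (2 : K)]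
    (ha : a ≠ 0) (h : discrim a b c ≠ 0) :
    {x : K | a * (x * x) + b * x + c = 0}.encard = 2 := by
  obtain ⟨s, hs⟩ := IsAlgClosed.exists_eq_mul_self (discrim a b c)
  have hs0 : s ≠ 0 := by rintro rfl; exact h (by simpa using hs)
  have hroots : {x : K | a * (x * x) + b * x + c = 0} =
      {(-b + s) / (2 * a), (-b - s) / (2 * a)} := by
    ext x
    exact quadratic_eq_zero_iff ha hs x
  rw [hroots, Set.encard_pair]
  rw [Ne, div_left_inj' (mul_ne_zero two_ne_zero ha), sub_eq_add_neg, add_right_inj,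
    eq_neg_iff_add_eq_zero, ← two_mul]
  exact mul_ne_zero two_ne_zero hs0

theorem encard_setOf_quadratic_eq_zero_of_discrim_eq_zero [NeZero (2 : K)] (ha : a ≠ 0)
    (h : discrim a b c = 0) : {x : K | a * (x * x) + b * x + c = 0}.encard = 1 :=
  Set.encard_eq_one.2 ⟨-b / (2 * a), Set.ext (quadratic_eq_zero_iff_of_discrim_eq_zero ha h)⟩

theorem encard_setOf_linear_eq_zero (hb : b ≠ 0) : {x : K | b * x + c = 0}.encard = 1 := by
  refine Set.encard_eq_one.2 ⟨-c / b, Set.ext fun x => ?_⟩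
  rw [Set.mem_ofPred_eq, Set.mem_singleton_iff, eq_div_iff hb, add_eq_zero_iff_eq_neg, mul_comm]

end Quadratic

theorem Projectivization.apply_rep_mk_eq_zero_iff {K V : Type*} [DivisionRing K] [AddCommGroup V]
    [Module K V] {F : V → K} {n : ℕ} (hF : ∀ (c : K) (v : V), F (c • v) = c ^ n * F v)
    {v : V} (hv : v ≠ 0) : F (mk K v hv).rep = 0 ↔ F v = 0 := by
  obtain ⟨c, hc⟩ := exists_smul_eq_mk_rep K v hv
  rw [← hc, Units.smul_def, hF, mul_eq_zero, or_iff_right (pow_ne_zero _ c.ne_zero)]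

namespace TangentConics

variable {K : Type*} [Field K]

def conicForm (t a b : K) (v : Fin 3 → K) : K :=
  v 0 ^ 2 + t * (v 0 * v 1) + a * v 1 ^ 2 - b * (v 1 * v 2)

def conicLocus (t a b : K) : Set (ℙ K (Fin 3 → K)) :=
  {P | conicForm t a b P.rep = 0}

def tangencyPoint : ℙ K (Fin 3 → K) :=
  mk K ![0, 0, 1] fun h => by simpa using congrFun h 2

def conicPoint (x : K) : ℙ K (Fin 3 → K) :=
  mk K ![x, 1, x * x] fun h => by simpa using congrFun h 1

theorem conicForm_smul (t a b c : K) (v : Fin 3 → K) :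
    conicForm t a b (c • v) = c ^ 2 * conicForm t a b v := by
  simp only [conicForm, Pi.smul_apply, smul_eq_mul]
  ring

theorem mk_mem_conicLocus_iff {t a b : K} {v : Fin 3 → K} (hv : v ≠ 0) :
    mk K v hv ∈ conicLocus t a b ↔ conicForm t a b v = 0 :=
  apply_rep_mk_eq_zero_iff (conicForm_smul t a b) hv

theorem tangencyPoint_mem_conicLocus (t a b : K) : tangencyPoint ∈ conicLocus t a b := by
  rw [tangencyPoint, mk_mem_conicLocus_iff]
  simp [conicForm]

theorem conicPoint_mem_conicLocus_iff {t a b x : K} :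
    conicPoint x ∈ conicLocus t a b ↔ (1 - b) * (x * x) + t * x + a = 0 := by
  have hform : conicForm t a b ![x, 1, x * x] = (1 - b) * (x * x) + t * x + a := by
    simp [conicForm]
    ring
  rw [conicPoint, mk_mem_conicLocus_iff, hform]

theorem preimage_conicPoint_conicLocus (t a b : K) :
    conicPoint ⁻¹' conicLocus t a b = {x : K | (1 - b) * (x * x) + t * x + a = 0} :=
  Set.ext fun _ => conicPoint_mem_conicLocus_iff

theorem conicPoint_injective : Function.Injective (conicPoint : K → ℙ K (Fin 3 → K)) := by
  intro x y hxy
  obtain ⟨c, hc⟩ := (mk_eq_mk_iff' K _ _ _ _).1 hxy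
  have hc1 : c = 1 := by simpa using congrFun hc 1
  simpa [hc1] using (congrFun hc 0).symm

theorem conicPoint_ne_tangencyPoint (x : K) : conicPoint x ≠ tangencyPoint := by
  intro h
  obtain ⟨c, hc⟩ := (mk_eq_mk_iff' K _ _ _ _).1 h
  simpa using congrFun hc 1

theorem mk_eq_tangencyPoint {v : Fin 3 → K} (hv : v ≠ 0) (hD : conicForm 0 0 1 v = 0)
    (h1 : v 1 = 0) : mk K v hv = tangencyPoint := by
  have h0 : v 0 = 0 := by simpa [conicForm, h1] using hD
  refine (mk_eq_mk_iff' K _ _ _ _).2 ⟨v 2, funext fun i => ?_⟩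
  fin_cases i <;> simp [h0, h1]

theorem mk_eq_conicPoint {v : Fin 3 → K} (hv : v ≠ 0) (hD : conicForm 0 0 1 v = 0)
    (h1 : v 1 ≠ 0) : mk K v hv = conicPoint (v 0 / v 1) := by
  refine (mk_eq_mk_iff' K _ _ _ _).2 ⟨v 1, funext fun i => ?_⟩
  fin_cases i
  · exact mul_div_cancel₀ _ h1
  · simp
  · show v 1 * (v 0 / v 1 * (v 0 / v 1)) = v 2
    simp only [conicForm] at hD
    field_simp
    linear_combination hD

theorem conicLocus_zero_zero_one :
    conicLocus (0 : K) 0 1 = insert tangencyPoint (Set.range conicPoint) := by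
  refine Set.Subset.antisymm (fun P hP => ?_) <| Set.insert_subset_iff.2
    ⟨tangencyPoint_mem_conicLocus 0 0 1,
      Set.range_subset_iff.2 fun x => conicPoint_mem_conicLocus_iff.2 (by simp)⟩
  induction P using Projectivization.ind with | h v hv =>
  rw [mk_mem_conicLocus_iff] at hP
  by_cases h1 : v 1 = 0
  · exact .inl (mk_eq_tangencyPoint hv hP h1)
  · exact .inr ⟨_, (mk_eq_conicPoint hv hP h1).symm⟩

theorem encard_conicLocus_inter (t a b : K) :
    (conicLocus t a b ∩ conicLocus 0 0 1).encard =
      {x : K | (1 - b) * (x * x) + t * x + a = 0}.encard + 1 := by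
  rw [Set.inter_comm, conicLocus_zero_zero_one,
    Set.insert_inter_of_mem (tangencyPoint_mem_conicLocus t a b),
    ← Set.image_preimage_eq_range_inter, Set.encard_insert_of_notMem,
    conicPoint_injective.encard_image]
  · rw [preimage_conicPoint_conicLocus]
  · rintro ⟨x, -, hx⟩
    exact conicPoint_ne_tangencyPoint x hx

end TangentConics

open TangentConics in
theorem tangent_conics_intersection_count_general {k : Type*} [Field k] [IsAlgClosed k]
    (hchar : (2 : k) ≠ 0) (t a b : k)
    (C D : Set (Projectivization k (Fin 3 → k)))
    (hC : C = {P | P.rep 0 ^ 2 + t * (P.rep 0 * P.rep 1) + a * P.rep 1 ^ 2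
      - b * (P.rep 1 * P.rep 2) = 0})
    (hD : D = {P | P.rep 0 ^ 2 - P.rep 1 * P.rep 2 = 0}) :
    (b ≠ 1 → t ^ 2 - 4 * a * (1 - b) ≠ 0 → (C ∩ D).ncard = 3) ∧
    (b ≠ 1 → t ^ 2 - 4 * a * (1 - b) = 0 → (C ∩ D).ncard = 2) ∧
    (b = 1 → t ≠ 0 → (C ∩ D).ncard = 2) ∧
    (b = 1 → t = 0 → a ≠ 0 → (C ∩ D).ncard = 1) := by
  have : NeZero (2 : k) := ⟨hchar⟩
  have hC' : C = conicLocus t a b := hC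
  have hD' : D = conicLocus 0 0 1 := hD.trans <| Set.ext fun P => by simp [conicLocus, conicForm]
  have hcount : (C ∩ D).ncard =
      ({x : k | (1 - b) * (x * x) + t * x + a = 0}.encard + 1).toNat := by
    rw [Set.ncard_def, hC', hD', encard_conicLocus_inter]
  have hdiscrim : discrim (1 - b) t a = t ^ 2 - 4 * a * (1 - b) := by
    rw [discrim]
    ring
  refine ⟨fun hb hΔ => ?_, fun hb hΔ => ?_, fun hb ht => ?_, fun hb ht ha => ?_⟩
  · rw [hcount, encard_setOf_quadratic_eq_zero_of_discrim_ne_zero (sub_ne_zero.2 hb.symm)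
      (hdiscrim ▸ hΔ)]
    rfl
  · rw [hcount, encard_setOf_quadratic_eq_zero_of_discrim_eq_zero (sub_ne_zero.2 hb.symm)
      (hdiscrim ▸ hΔ)]
    rfl
  · subst hb
    simp only [sub_self, zero_mul, zero_add] at hcount
    rw [hcount, encard_setOf_linear_eq_zero ht]
    rfl
  · subst hb ht
    simp only [sub_self, zero_mul, zero_add, ha, Set.ofPred_false, Set.encard_empty] at hcount
    exact hcount

/-- **Number of intersection points of a pair of tangent conics.**
For the tangent conics `C : x² + txy + ay² − byz = 0` and `D : x² − yz = 0` (tangent at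
`[0:0:1]`, `b ≠ 0`) with `Δ = t² − 4a(1−b)`, the set `C ∩ D` has exactly `3` points if `b ≠ 1`
and `Δ ≠ 0` (intersection type `(2,1,1)`), exactly `2` points if `b ≠ 1` and `Δ = 0` (type
`(2,2)`), exactly `2` points if `b = 1` and `t ≠ 0` (type `(3,1)`), and exactly `1` point if
`b = 1`, `t = 0`, `a ≠ 0` (type `(4)`). -/
theorem tangent_conics_intersection_count {k : Type*} [Field k] [IsAlgClosed k]
    (hchar : (2 : k) ≠ 0) (t a b : k) (hb : b ≠ 0)
    (C D : Set (Projectivization k (Fin 3 → k)))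
    (hC : C = {P | P.rep 0 ^ 2 + t * (P.rep 0 * P.rep 1) + a * P.rep 1 ^ 2
      - b * (P.rep 1 * P.rep 2) = 0})
    (hD : D = {P | P.rep 0 ^ 2 - P.rep 1 * P.rep 2 = 0}) :
    (b ≠ 1 → t ^ 2 - 4 * a * (1 - b) ≠ 0 → (C ∩ D).ncard = 3) ∧
    (b ≠ 1 → t ^ 2 - 4 * a * (1 - b) = 0 → (C ∩ D).ncard = 2) ∧
    (b = 1 → t ≠ 0 → (C ∩ D).ncard = 2) ∧
    (b = 1 → t = 0 → a ≠ 0 → (C ∩ D).ncard = 1) :=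
  tangent_conics_intersection_count_general hchar t a b C D hC hD
end

section
/- Let t, a, b ∈ k with b ≠ 0, and consider the polynomial H(U,V) = bU² − 2bUV + (1 + tU + aU²)V² in the polynomial ring k[U,V]. Then H is reducible (i.e., a product of two nonconstant polynomials) if and only if t² − 4a(1−b) = 0. Moreover, when t² − 4a(1−b) = 0, H factors as H = H₁·H₂ where each factor Hᵢ has degree at most 1 in U and degree at most 1 in V (i.e., Hᵢ = pᵢUV + qᵢU + rᵢV + sᵢ for some pᵢ, qᵢ, rᵢ, sᵢ ∈ k). -/
open MvPolynomial

lemma factor_eq {k : Type*} [CommRing k] (t a b p₁ q₁ p₂ q₂ : k)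
    (h1 : p₁*p₂ = a) (h2 : p₁*q₂+p₂*q₁ = 0) (h3 : q₁*q₂ = b) (h4 : p₁+p₂ = t)
    (h5 : q₁+q₂ = -(2*b)) :
    (C b * X 0 ^ 2 - C (2 * b) * (X 0 * X 1)
      + (C 1 + C t * X 0 + C a * X 0 ^ 2) * X 1 ^ 2 : MvPolynomial (Fin 2) k)
    = (C p₁ * (X 0 * X 1) + C q₁ * X 0 + C 1 * X 1 + C 0) *
      (C p₂ * (X 0 * X 1) + C q₂ * X 0 + C 1 * X 1 + C 0) := by
  have H1 : (C (p₁*p₂) : MvPolynomial (Fin 2) k) = C a := by rw [h1]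
  have H2 : (C (p₁*q₂+p₂*q₁) : MvPolynomial (Fin 2) k) = C 0 := by rw [h2]
  have H3 : (C (q₁*q₂) : MvPolynomial (Fin 2) k) = C b := by rw [h3]
  have H4 : (C (p₁+p₂) : MvPolynomial (Fin 2) k) = C t := by rw [h4]
  have H5 : (C (q₁+q₂) : MvPolynomial (Fin 2) k) = C (-(2*b)) := by rw [h5]
  simp only [map_add, map_mul, map_neg, map_zero, map_one, map_ofNat] at H1 H2 H3 H4 H5 ⊢
  linear_combination (-1:MvPolynomial (Fin 2) k) * ((X 0^2 * X 1^2) * H1 + (X 0^2 * X 1) * H2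
    + (X 0^2 : MvPolynomial (Fin 2) k) * H3 + (X 0 * X 1^2) * H4 + (X 0 * X 1) * H5)

lemma exists_pq {k : Type*} [Field k] [IsAlgClosed k] (hchar : (2:k) ≠ 0) (t a b : k)
    (hb : b ≠ 0) (hcond : t^2 - 4*a*(1-b) = 0) :
    ∃ p₁ q₁ p₂ q₂ : k, p₁*p₂ = a ∧ p₁*q₂+p₂*q₁ = 0 ∧ q₁*q₂ = b ∧ p₁+p₂ = t ∧
      q₁+q₂ = -(2*b) := by
  obtain ⟨w, hw⟩ := IsAlgClosed.exists_pow_nat_eq (b*(b-1)) (n := 2) (by norm_num)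
  by_cases hb1 : b = 1
  · subst hb1
    have ht : t = 0 := by
      have h : t^2 = 0 := by linear_combination hcond
      exact pow_eq_zero_iff (n := 2) (by norm_num) |>.mp h
    obtain ⟨e, he⟩ := IsAlgClosed.exists_pow_nat_eq (-a) (n := 2) (by norm_num)
    exact ⟨e, -1, -e, -1, by linear_combination -he, by ring, by ring, by
      simp [ht], by ring⟩
  · have hw0 : w ≠ 0 := by
      intro h
      have hz : b * (b - 1) = 0 := by rw [← hw, h]; ring
      rcases mul_eq_zero.mp hz with h' | h'
      · exact hb h'
      · exact hb1 (by linear_combination h')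
    have h2w : (2*w) ≠ 0 := mul_ne_zero hchar hw0
    refine ⟨t*(w-b)/(2*w), -b+w, t*(w+b)/(2*w), -b-w, ?_, ?_, ?_, ?_, by ring⟩
    · field_simp
      linear_combination (t^2-4*a)*hw - b*hcond
    · field_simp
      ring
    · linear_combination -hw
    · field_simp
      ring

noncomputable def phi (k : Type*) [CommRing k] :
    MvPolynomial (Fin 2) k →ₐ[k] Polynomial (Polynomial k) :=
  aeval ![(Polynomial.X : Polynomial (Polynomial k)), Polynomial.C Polynomial.X]

noncomputable def chi (k : Type*) [CommRing k] :
    Polynomial (Polynomial k) →+* MvPolynomial (Fin 2) k :=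
  Polynomial.eval₂RingHom (Polynomial.eval₂RingHom (MvPolynomial.C) (X 1)) (X 0)

lemma chi_phi {k : Type*} [CommRing k] (p : MvPolynomial (Fin 2) k) :
    chi k (phi k p) = p := by
  have h : (chi k).comp ((phi k) : MvPolynomial (Fin 2) k →+* Polynomial (Polynomial k))
      = RingHom.id _ := by
    apply MvPolynomial.ringHom_ext
    · intro c
      simp [phi, chi]
    · intro i
      fin_cases i <;> simp [phi, chi]
  exact congrFun (congrArg DFunLike.coe h) p

lemma phi_inj {k : Type*} [CommRing k] : Function.Injective (phi k) :=
  Function.LeftInverse.injective chi_phi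

lemma phi_H {k : Type*} [CommRing k] (t a b : k) :
    phi k (C b * X 0 ^ 2 - C (2 * b) * (X 0 * X 1)
      + (C 1 + C t * X 0 + C a * X 0 ^ 2) * X 1 ^ 2)
    = Polynomial.C (Polynomial.C b + Polynomial.C a * Polynomial.X^2) * Polynomial.X^2
      + Polynomial.C (Polynomial.C t * Polynomial.X^2 - Polynomial.C (2*b) * Polynomial.X)
          * Polynomial.X
      + Polynomial.C (Polynomial.X^2) := by
  simp only [phi, map_add, map_sub, map_mul, map_pow, map_one, aeval_X, aeval_C,
    Matrix.cons_val_zero, Matrix.cons_val_one, Matrix.head_cons]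
  simp only [Polynomial.algebraMap_apply, Polynomial.algebraMap_eq]
  ring

lemma sq_quad {k : Type*} [Field k] (α β γ : k) (T : Polynomial k)
    (h : T^2 = Polynomial.C α * Polynomial.X^2 + Polynomial.C β * Polynomial.X
      + Polynomial.C γ) : β^2 = 4*α*γ := by
  by_cases hT : T = 0
  · subst hT
    have hα : α = 0 := by simpa using (congrArg (fun p => Polynomial.coeff p 2) h).symm
    have hβ : β = 0 := by simpa using (congrArg (fun p => Polynomial.coeff p 1) h).symm
    rw [hα, hβ]; ring
  · have hd : T.natDegree ≤ 1 := by
      have h2 : (T^2).natDegree = 2 * T.natDegree := by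
        simpa using Polynomial.natDegree_pow T 2
      have h3 : (T^2).natDegree ≤ 2 := by rw [h]; exact Polynomial.natDegree_quadratic_le
      omega
    have hTeq := Polynomial.eq_X_add_C_of_natDegree_le_one hd
    set u := T.coeff 1
    set v := T.coeff 0
    rw [hTeq] at h
    have hsq : (Polynomial.C u * Polynomial.X + Polynomial.C v) ^ 2
        = Polynomial.C (u^2) * Polynomial.X^2 + Polynomial.C (2*(u*v)) * Polynomial.X
          + Polynomial.C (v^2) := by
      simp only [map_pow, map_mul, map_ofNat]
      ring
    rw [hsq] at h
    have e2 : u^2 = α := by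
      have := congrArg (fun p => Polynomial.coeff p 2) h
      simp only [Polynomial.coeff_add, Polynomial.coeff_C_mul, Polynomial.coeff_X_pow,
        Polynomial.coeff_X, Polynomial.coeff_C] at this
      norm_num at this
      exact this
    have e1 : 2*(u*v) = β := by
      have := congrArg (fun p => Polynomial.coeff p 1) h
      simp only [Polynomial.coeff_add, Polynomial.coeff_C_mul, Polynomial.coeff_X_pow,
        Polynomial.coeff_X, Polynomial.coeff_C] at this
      norm_num at this
      exact this
    have e0 : v^2 = γ := by
      have := congrArg (fun p => Polynomial.coeff p 0) h
      simp only [Polynomial.coeff_add, Polynomial.coeff_C_mul, Polynomial.coeff_X_pow,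
        Polynomial.coeff_X, Polynomial.coeff_C] at this
      norm_num at this
      exact this
    linear_combination (-(β+2*u*v))*e1 + 4*γ*e2 + 4*u^2*e0
open MvPolynomial in
lemma forward {k : Type*} [Field k] (hchar : (2 : k) ≠ 0) (t a b : k) (hb : b ≠ 0)
    (H : MvPolynomial (Fin 2) k)
    (hH : H = C b * X 0 ^ 2 - C (2 * b) * (X 0 * X 1)
      + (C 1 + C t * X 0 + C a * X 0 ^ 2) * X 1 ^ 2)
    (H₁ H₂ : MvPolynomial (Fin 2) k) (hmul : H = H₁ * H₂)
    (hd1 : H₁.totalDegree ≠ 0) (hd2 : H₂.totalDegree ≠ 0) :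
    t ^ 2 - 4 * a * (1 - b) = 0 := by
  set P : Polynomial (Polynomial k) :=
    Polynomial.C (Polynomial.C b + Polynomial.C a * Polynomial.X^2) * Polynomial.X^2
      + Polynomial.C (Polynomial.C t * Polynomial.X^2 - Polynomial.C (2*b) * Polynomial.X)
          * Polynomial.X
      + Polynomial.C (Polynomial.X^2) with hPdef
  have hP : phi k H = P := by rw [hH]; exact phi_H t a b
  set A := phi k H₁ with hAdef
  set B := phi k H₂ with hBdef
  have hAB : P = A * B := by rw [← hP, hmul, map_mul]
  -- nonconstancy
  have hcn : ∀ (G : MvPolynomial (Fin 2) k), G.totalDegree ≠ 0 →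
      ∀ c : k, phi k G ≠ Polynomial.C (Polynomial.C c) := by
    intro G hG c hc
    apply hG
    have : G = MvPolynomial.C c := by
      apply phi_inj
      rw [hc]
      simp [phi, MvPolynomial.aeval_C, Polynomial.algebraMap_apply, Polynomial.algebraMap_eq]
    rw [this]
    exact totalDegree_C c
  have hAc := hcn H₁ hd1
  have hBc := hcn H₂ hd2
  -- coefficients of P
  have c2 : P.coeff 2 = Polynomial.C b + Polynomial.C a * Polynomial.X^2 := by
    simp only [hPdef, Polynomial.coeff_add, Polynomial.coeff_C_mul, Polynomial.coeff_X_pow,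
      Polynomial.coeff_X, Polynomial.coeff_C]
    norm_num
  have c1 : P.coeff 1 = Polynomial.C t * Polynomial.X^2 - Polynomial.C (2*b) * Polynomial.X := by
    simp only [hPdef, Polynomial.coeff_add, Polynomial.coeff_C_mul, Polynomial.coeff_X_pow,
      Polynomial.coeff_X, Polynomial.coeff_C]
    norm_num
  have c0 : P.coeff 0 = Polynomial.X^2 := by
    simp only [hPdef, Polynomial.coeff_add, Polynomial.coeff_C_mul, Polynomial.coeff_X_pow,
      Polynomial.coeff_X, Polynomial.coeff_C]
    norm_num
  have hc2ne : (Polynomial.C b + Polynomial.C a * Polynomial.X^2 : Polynomial k) ≠ 0 := by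
    intro h
    exact hb (by simpa using congrArg (fun p => Polynomial.coeff p 0) h)
  have hPne : P ≠ 0 := by
    intro h
    rw [h] at c2
    exact hc2ne (by simpa using c2.symm)
  have hA0 : A ≠ 0 := fun h => hPne (by rw [hAB, h, zero_mul])
  have hB0 : B ≠ 0 := fun h => hPne (by rw [hAB, h, mul_zero])
  have hPdeg : P.natDegree = 2 := by
    rw [hPdef]
    exact Polynomial.natDegree_quadratic hc2ne
  have hsum : A.natDegree + B.natDegree = 2 := by
    rw [← Polynomial.natDegree_mul hA0 hB0, ← hAB, hPdeg]
  -- helper: constant factor case is impossible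
  have hconstcase : ∀ (A' B' : Polynomial (Polynomial k)), P = A' * B' →
      (∀ c : k, A' ≠ Polynomial.C (Polynomial.C c)) → A'.natDegree = 0 → False := by
    intro A' B' hAB' hAc' hdA
    obtain ⟨g, hg⟩ := Polynomial.natDegree_eq_zero.mp hdA
    have h0 : Polynomial.X^2 = g * B'.coeff 0 := by
      rw [← c0, hAB', ← hg, Polynomial.coeff_C_mul]
    have h2 : Polynomial.C b + Polynomial.C a * Polynomial.X^2 = g * B'.coeff 2 := by
      rw [← c2, hAB', ← hg, Polynomial.coeff_C_mul]
    have hdvd : g ∣ Polynomial.C b := by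
      refine ⟨B'.coeff 2 - Polynomial.C a * B'.coeff 0, ?_⟩
      have : Polynomial.C b = (Polynomial.C b + Polynomial.C a * Polynomial.X^2)
          - Polynomial.C a * Polynomial.X^2 := by ring
      rw [this, h2, h0]
      ring
    have hgu : IsUnit g := isUnit_of_dvd_unit hdvd (Polynomial.isUnit_C.mpr hb.isUnit)
    obtain ⟨r, hr, hrg⟩ := Polynomial.isUnit_iff.mp hgu
    exact hAc' r (by rw [← hg, ← hrg])
  -- case analysis
  have h012 : A.natDegree = 0 ∨ A.natDegree = 1 ∨ A.natDegree = 2 := by omega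
  rcases h012 with hdA | hdA | hdA
  · exact (hconstcase A B hAB hAc hdA).elim
  · -- degree 1 each
    have hdB : B.natDegree = 1 := by omega
    have hAeq := Polynomial.eq_X_add_C_of_natDegree_le_one hdA.le
    have hBeq := Polynomial.eq_X_add_C_of_natDegree_le_one hdB.le
    set A1 := A.coeff 1 with hA1
    set A0 := A.coeff 0 with hA0'
    set B1 := B.coeff 1 with hB1
    set B0 := B.coeff 0 with hB0'
    have hprod : P = Polynomial.C (A1*B1) * Polynomial.X^2
        + Polynomial.C (A1*B0+A0*B1) * Polynomial.X + Polynomial.C (A0*B0) := by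
      rw [hAB, hAeq, hBeq]
      simp only [map_mul, map_add]
      ring
    have e2 : A1*B1 = Polynomial.C b + Polynomial.C a * Polynomial.X^2 := by
      have h' := congrArg (fun p => Polynomial.coeff p 2) hprod
      simp only [Polynomial.coeff_add, Polynomial.coeff_C_mul, Polynomial.coeff_X_pow,
        Polynomial.coeff_X, Polynomial.coeff_C] at h'
      norm_num at h'
      rw [c2] at h'
      exact h'.symm
    have e1 : A1*B0+A0*B1 = Polynomial.C t * Polynomial.X^2
        - Polynomial.C (2*b) * Polynomial.X := by
      have h' := congrArg (fun p => Polynomial.coeff p 1) hprod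
      simp only [Polynomial.coeff_add, Polynomial.coeff_C_mul, Polynomial.coeff_X_pow,
        Polynomial.coeff_X, Polynomial.coeff_C] at h'
      norm_num at h'
      rw [c1] at h'
      exact h'.symm
    have e0 : A0*B0 = Polynomial.X^2 := by
      have h' := congrArg (fun p => Polynomial.coeff p 0) hprod
      simp only [Polynomial.coeff_add, Polynomial.coeff_C_mul, Polynomial.coeff_X_pow,
        Polynomial.coeff_X, Polynomial.coeff_C] at h'
      norm_num at h'
      rw [c0] at h'
      exact h'.symm
    have hS : (A1*B0 - A0*B1)^2 = Polynomial.X^2 * (Polynomial.C (t^2-4*a) * Polynomial.X^2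
        + Polynomial.C (-(4*b*t)) * Polynomial.X + Polynomial.C (4*b^2-4*b)) := by
      have hid : (A1*B0 - A0*B1)^2 = (A1*B0+A0*B1)^2 - 4*(A1*B1)*(A0*B0) := by ring
      rw [hid, e2, e1, e0]
      simp only [map_sub, map_mul, map_pow, map_add, map_neg, map_ofNat]
      ring
    have hXdvd : Polynomial.X ∣ (A1*B0 - A0*B1) := by
      apply Polynomial.prime_X.dvd_of_dvd_pow (n := 2)
      exact ⟨Polynomial.X * (Polynomial.C (t^2-4*a) * Polynomial.X^2
        + Polynomial.C (-(4*b*t)) * Polynomial.X + Polynomial.C (4*b^2-4*b)), by rw [hS]; ring⟩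
    obtain ⟨T, hT⟩ := hXdvd
    have hQ : T^2 = Polynomial.C (t^2-4*a) * Polynomial.X^2
        + Polynomial.C (-(4*b*t)) * Polynomial.X + Polynomial.C (4*b^2-4*b) := by
      have hX2 : (Polynomial.X^2 : Polynomial k) ≠ 0 := pow_ne_zero _ Polynomial.X_ne_zero
      apply mul_left_cancel₀ hX2
      rw [← hS, hT]
      ring
    have hsq := sq_quad _ _ _ T hQ
    have h16b : (16:k)*b ≠ 0 := by
      apply mul_ne_zero _ hb
      have h4 := pow_ne_zero 4 hchar
      norm_num at h4
      exact_mod_cast h4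
    have key : (16*b)*(t^2-4*a*(1-b)) = 0 := by linear_combination hsq
    rcases mul_eq_zero.mp key with h | h
    · exact absurd h h16b
    · exact h
  · have hdB : B.natDegree = 0 := by omega
    exact (hconstcase B A (by rw [hAB]; ring) hBc hdB).elim

lemma nonconst {k : Type*} [CommRing k] [Nontrivial k] (p q : k) :
    (C p * (X 0 * X 1) + C q * X 0 + C 1 * X 1 + C 0 :
      MvPolynomial (Fin 2) k).totalDegree ≠ 0 := by
  intro h
  have hc : coeff (Finsupp.single 1 1)
      (C p * (X 0 * X 1) + C q * X 0 + C 1 * X 1 + C 0 : MvPolynomial (Fin 2) k) = 1 := by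
    have hxx : (X 0 * X 1 : MvPolynomial (Fin 2) k)
        = monomial (Finsupp.single 0 1 + Finsupp.single 1 1) 1 := by
      rw [monomial_eq]
      simp [Finsupp.prod_add_index, Finsupp.prod_single_index]
    rw [hxx]
    simp [coeff_add, coeff_C_mul, coeff_monomial, coeff_X', coeff_C, Finsupp.single_eq_single_iff]
  have hsupp : Finsupp.single 1 1 ∈
      (C p * (X 0 * X 1) + C q * X 0 + C 1 * X 1 + C 0 : MvPolynomial (Fin 2) k).support := by
    rw [mem_support_iff, hc]
    exact one_ne_zero
  have := (totalDegree_eq_zero_iff _ _).mp h (Finsupp.single 1 1) hsupp 1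
  simp at this

/-- **Reducibility of the incidence curve of a pair of tangent conics.**
For `b ≠ 0`, the polynomial `H(U,V) = bU² − 2bUV + (1 + tU + aU²)V²` is a product of two
nonconstant polynomials if and only if `t² − 4a(1−b) = 0`, in which case the two factors can
be taken of bidegree `(1,1)`, i.e. of the form `pUV + qU + rV + s`. -/
theorem incidence_curve_reducible_iff {k : Type*} [Field k] [IsAlgClosed k]
    (hchar : (2 : k) ≠ 0) (t a b : k) (hb : b ≠ 0)
    (H : MvPolynomial (Fin 2) k)
    (hH : H = C b * X 0 ^ 2 - C (2 * b) * (X 0 * X 1)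
      + (C 1 + C t * X 0 + C a * X 0 ^ 2) * X 1 ^ 2) :
    ((∃ H₁ H₂ : MvPolynomial (Fin 2) k, H = H₁ * H₂ ∧
        H₁.totalDegree ≠ 0 ∧ H₂.totalDegree ≠ 0) ↔ t ^ 2 - 4 * a * (1 - b) = 0) ∧
    (t ^ 2 - 4 * a * (1 - b) = 0 →
      ∃ p₁ q₁ r₁ s₁ p₂ q₂ r₂ s₂ : k,
        H = (C p₁ * (X 0 * X 1) + C q₁ * X 0 + C r₁ * X 1 + C s₁) *
            (C p₂ * (X 0 * X 1) + C q₂ * X 0 + C r₂ * X 1 + C s₂)) := by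
  constructor
  · constructor
    · rintro ⟨H₁, H₂, hmul, hd1, hd2⟩
      exact forward hchar t a b hb H hH H₁ H₂ hmul hd1 hd2
    · intro hcond
      obtain ⟨p₁, q₁, p₂, q₂, h1, h2, h3, h4, h5⟩ := exists_pq hchar t a b hb hcond
      refine ⟨_, _, ?_, nonconst p₁ q₁, nonconst p₂ q₂⟩
      rw [hH]
      exact factor_eq t a b p₁ q₁ p₂ q₂ h1 h2 h3 h4 h5
  · intro hcond
    obtain ⟨p₁, q₁, p₂, q₂, h1, h2, h3, h4, h5⟩ := exists_pq hchar t a b hb hcond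
    exact ⟨p₁, q₁, 1, 0, p₂, q₂, 1, 0, by
      rw [hH]; exact factor_eq t a b p₁ q₁ p₂ q₂ h1 h2 h3 h4 h5⟩
end

section
/- Let k be an algebraically closed field of characteristic 2 and let C = {[x₀ : x₁ : x₂] ∈ ℙ²(k) : x₀x₁ + x₂² = 0}. For every point q ∈ ℙ²(k) with q ≠ [0:0:1], there is exactly one projective line L in ℙ²(k) such that q ∈ L and L ∩ C consists of exactly one point (namely, the line through q and [0:0:1]). -/
/-!
In characteristic 2 every tangent line of `C : x₀x₁ + x₂² = 0` passes through the nucleus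
`N = [0:0:1]`, and conversely every line through `N` is tangent. Indeed, `[s:t] ↦ [s²:t²:st]`
parametrizes `C`, so a line `a x₀ + b x₁ + c x₂ = 0` meets `C` in the zeros of the binary
form `a s² + c st + b t²`; when `c ≠ 0` this form is separable and has two zeros. A line
through `N`, `a x₀ + b x₁ = 0`, meets `C` only at `[b : a : √(ab)]`. Hence the tangent lines
through `q ≠ N` are exactly the lines through `q` and `N`, of which there is one.
-/

open Module Projectivization
open scoped LinearAlgebra.Projectivization

namespace Projectivization

variable {k V : Type*} [Field k] [AddCommGroup V] [Module k V]

lemma mem_ker_projectivization_iff (φ : V →ₗ[k] k) (x : ℙ k V) :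
    x ∈ (LinearMap.ker φ).projectivization ↔ φ x.rep = 0 := by
  conv_lhs => rw [← x.mk_rep]
  exact Submodule.mk_mem_projectivization_iff _ _

lemma apply_rep_mk_eq_zero_iff_s14 (φ : V →ₗ[k] k) {v : V} (hv : v ≠ 0) :
    φ (mk k v hv).rep = 0 ↔ φ v = 0 :=
  (mem_ker_projectivization_iff φ _).symm.trans
    (Submodule.mk_mem_projectivization_iff _ hv)

lemma exists_ne_zero_apply_eq_zero_of_two_lt_finrank [FiniteDimensional k V]
    (hV : 2 < finrank k V) (u v : V) : ∃ φ : V →ₗ[k] k, φ ≠ 0 ∧ φ u = 0 ∧ φ v = 0 := by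
  classical
  have hspan : Submodule.span k {u, v} < ⊤ := by
    refine Submodule.lt_top_of_finrank_lt_finrank (lt_of_le_of_lt ?_ hV)
    exact (finrank_span_le_card _).trans (by simpa using Finset.card_insert_le u {v})
  obtain ⟨φ, hφ, hle⟩ := (Submodule.span k {u, v}).exists_le_ker_of_lt_top hspan
  exact ⟨φ, hφ, hle (Submodule.subset_span (by simp)),
    hle (Submodule.subset_span (by simp))⟩

lemma setOf_apply_rep_eq_zero_eq_of_ne [FiniteDimensional k V] (hV : finrank k V = 3)
    {φ ψ : V →ₗ[k] k} (hφ : φ ≠ 0) (hψ : ψ ≠ 0) {x y : ℙ k V} (hxy : x ≠ y)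
    (hφx : φ x.rep = 0) (hφy : φ y.rep = 0) (hψx : ψ x.rep = 0) (hψy : ψ y.rep = 0) :
    {P : ℙ k V | φ P.rep = 0} = {P | ψ P.rep = 0} := by
  have hker : ∀ {χ : V →ₗ[k] k}, χ ≠ 0 → finrank k (LinearMap.ker χ) = 2 := fun hχ => by
    have := Module.Dual.finrank_ker_add_one_of_ne_zero hχ
    omega
  have hφψ := line_unique hxy _ _ (hker hφ) (hker hψ)
    ((mem_ker_projectivization_iff φ x).2 hφx) ((mem_ker_projectivization_iff φ y).2 hφy)
    ((mem_ker_projectivization_iff ψ x).2 hψx) ((mem_ker_projectivization_iff ψ y).2 hψy)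
  ext P
  change φ P.rep = 0 ↔ ψ P.rep = 0
  rw [← mem_ker_projectivization_iff, hφψ, mem_ker_projectivization_iff]

end Projectivization

lemma LinearMap.apply_eq_fin_three {k : Type*} [Field k] (φ : (Fin 3 → k) →ₗ[k] k)
    (v : Fin 3 → k) :
    φ v = φ ![1, 0, 0] * v 0 + φ ![0, 1, 0] * v 1 + φ ![0, 0, 1] * v 2 := by
  have hv : v = v 0 • ![(1 : k), 0, 0] + v 1 • ![0, 1, 0] + v 2 • ![0, 0, 1] := by
    ext i; fin_cases i <;> simp
  conv_lhs => rw [hv]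
  simp only [map_add, map_smul, smul_eq_mul]
  ring

lemma CharTwo.exists_nonproportional_zeros_of_binary_quadratic {k : Type*} [Field k]
    [IsAlgClosed k] [CharP k 2] (a c : k) {b : k} (hb : b ≠ 0) :
    ∃ s t s' t' : k, s * t' ≠ t * s' ∧
      a * s ^ 2 + b * s * t + c * t ^ 2 = 0 ∧ a * s' ^ 2 + b * s' * t' + c * t' ^ 2 = 0 := by
  have h2 : (2 : k) = 0 := CharTwo.two_eq_zero
  rcases eq_or_ne a 0 with ha | ha
  · refine ⟨1, 0, c, b, by simpa using hb, by simp [ha], ?_⟩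
    linear_combination (b ^ 2 * c) * h2 + c ^ 2 * ha
  · open Polynomial in
    obtain ⟨x, hx⟩ := IsAlgClosed.exists_root (C a * X ^ 2 + C b * X + C c)
      (by rw [degree_quadratic ha]; decide)
    simp only [Polynomial.IsRoot.def, Polynomial.eval_add, Polynomial.eval_mul,
      Polynomial.eval_C, Polynomial.eval_pow, Polynomial.eval_X] at hx
    refine ⟨x, 1, x + b / a, 1, fun h => div_ne_zero hb ha (by linear_combination -h),
      by linear_combination hx, ?_⟩
    field_simp
    linear_combination a * hx + (a * b * x + b ^ 2) * h2

section StandardConic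

variable {k : Type*} [Field k]

def standardConic (k : Type*) [Field k] : Set (ℙ k (Fin 3 → k)) :=
  {P | P.rep 0 * P.rep 1 + P.rep 2 ^ 2 = 0}

lemma mk_mem_standardConic_iff {v : Fin 3 → k} (hv : v ≠ 0) :
    mk k v hv ∈ standardConic k ↔ v 0 * v 1 + v 2 ^ 2 = 0 := by
  obtain ⟨a, ha⟩ := exists_smul_eq_mk_rep k v hv
  change (mk k v hv).rep 0 * (mk k v hv).rep 1 + (mk k v hv).rep 2 ^ 2 = 0 ↔ _
  rw [← ha]
  simp only [Pi.smul_apply, Units.smul_def, smul_eq_mul]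
  rw [show (a : k) * v 0 * (a * v 1) + (a * v 2) ^ 2 = (a : k) ^ 2 * (v 0 * v 1 + v 2 ^ 2) by ring]
  simp [a.ne_zero]

lemma exists_inter_standardConic_eq_singleton [IsAlgClosed k] [CharP k 2]
    {φ : (Fin 3 → k) →ₗ[k] k} (hφ : φ ≠ 0) (hN : φ ![0, 0, 1] = 0) :
    ∃ P, {P | φ P.rep = 0} ∩ standardConic k = {P} := by
  have h2 : (2 : k) = 0 := CharTwo.two_eq_zero
  set a := φ ![1, 0, 0]
  set b := φ ![0, 1, 0]
  obtain ⟨s, hs⟩ := IsAlgClosed.exists_pow_nat_eq (a * b) two_pos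
  have hp : ![b, a, s] ≠ 0 := fun hp => hφ <| LinearMap.ext fun v => by
    have hb : φ ![0, 1, 0] = 0 := congrFun hp 0
    have ha : φ ![1, 0, 0] = 0 := congrFun hp 1
    rw [φ.apply_eq_fin_three v, ha, hb, hN]
    simp
  refine ⟨mk k _ hp, Set.eq_singleton_iff_unique_mem.2 ⟨⟨?_, ?_⟩, ?_⟩⟩
  · change φ (mk k _ hp).rep = 0
    rw [apply_rep_mk_eq_zero_iff_s14, φ.apply_eq_fin_three, hN]
    simp only [Matrix.cons_val_zero, Matrix.cons_val_one, Matrix.cons_val, zero_mul, add_zero]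
    linear_combination a * b * h2
  · rw [mk_mem_standardConic_iff]
    simp only [Matrix.cons_val_zero, Matrix.cons_val_one, Matrix.cons_val]
    linear_combination hs + a * b * h2
  · rintro R ⟨hL, hC⟩
    induction R using Projectivization.ind with | h v hv =>
    change φ (mk k v hv).rep = 0 at hL
    rw [apply_rep_mk_eq_zero_iff_s14, φ.apply_eq_fin_three, hN] at hL
    rw [mk_mem_standardConic_iff] at hC
    rw [mk_eq_mk_iff_crossProduct_eq_zero]
    ext i
    fin_cases i <;>
      simp only [crossProduct, LinearMap.mk₂_apply, Fin.isValue, Fin.zero_eta, Fin.mk_one,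
        Fin.reduceFinMk, Matrix.cons_val, Matrix.cons_val_one, Matrix.cons_val_zero, Pi.zero_apply]
    · linear_combination (exp := 2) v 1 ^ 2 * hs + a ^ 2 * hC - a * v 1 * hL +
        (a * b * v 1 ^ 2 - v 1 * v 2 * s * a) * h2
    · linear_combination (exp := 2) v 0 ^ 2 * hs + b ^ 2 * hC - b * v 0 * hL +
        (a * b * v 0 ^ 2 - v 0 * v 2 * b * s) * h2
    · linear_combination hL - b * v 1 * h2

def conicParam (s t : k) : Fin 3 → k := ![s ^ 2, t ^ 2, s * t]

lemma conicParam_ne_zero {s t s' t' : k} (h : s * t' ≠ t * s') : conicParam s t ≠ 0 := by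
  intro h0
  have hs : s = 0 := pow_eq_zero_iff two_ne_zero |>.1 (congrFun h0 0)
  have ht : t = 0 := pow_eq_zero_iff two_ne_zero |>.1 (congrFun h0 1)
  simp [hs, ht] at h

lemma mk_conicParam_mem_standardConic [CharP k 2] {s t : k} (hv : conicParam s t ≠ 0) :
    mk k _ hv ∈ standardConic k := by
  rw [mk_mem_standardConic_iff]
  simp only [conicParam, Matrix.cons_val_zero, Matrix.cons_val_one, Matrix.cons_val]
  linear_combination s ^ 2 * t ^ 2 * CharTwo.two_eq_zero (R := k)

lemma mk_conicParam_ne [CharP k 2] {s t s' t' : k} (h : s * t' ≠ t * s')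
    (hv : conicParam s t ≠ 0) (hv' : conicParam s' t' ≠ 0) : mk k _ hv ≠ mk k _ hv' := by
  rw [Ne, mk_eq_mk_iff_crossProduct_eq_zero]
  intro h0
  have h2 := congrFun h0 2
  simp only [crossProduct, conicParam, LinearMap.mk₂_apply, Fin.isValue, Matrix.cons_val,
    Matrix.cons_val_one, Matrix.cons_val_zero, Pi.zero_apply] at h2
  refine h (sub_eq_zero.1 ?_)
  linear_combination (exp := 2)
    h2 + (t ^ 2 * s' ^ 2 - s * t' * t * s') * CharTwo.two_eq_zero (R := k)

lemma apply_eq_zero_of_ncard_inter_standardConic_eq_one [IsAlgClosed k] [CharP k 2]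
    {φ : (Fin 3 → k) →ₗ[k] k} (h : ({P | φ P.rep = 0} ∩ standardConic k).ncard = 1) :
    φ ![0, 0, 1] = 0 := by
  by_contra hc
  obtain ⟨s, t, s', t', hst, hφ, hφ'⟩ :=
    CharTwo.exists_nonproportional_zeros_of_binary_quadratic (φ ![1, 0, 0]) (φ ![0, 1, 0]) hc
  obtain ⟨P, hP⟩ := Set.ncard_eq_one.1 h
  have hmem : ∀ {s t : k} (hv : conicParam s t ≠ 0),
      φ ![1, 0, 0] * s ^ 2 + φ ![0, 0, 1] * s * t + φ ![0, 1, 0] * t ^ 2 = 0 →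
      mk k _ hv = P := fun hv hzero => by
    rw [← Set.mem_singleton_iff, ← hP]
    refine ⟨?_, mk_conicParam_mem_standardConic hv⟩
    change φ (mk k _ hv).rep = 0
    rw [apply_rep_mk_eq_zero_iff_s14, φ.apply_eq_fin_three]
    simp only [conicParam, Matrix.cons_val_zero, Matrix.cons_val_one, Matrix.cons_val]
    linear_combination hzero
  have hst' : s' * t ≠ t' * s := fun h => hst (by linear_combination -h)
  exact mk_conicParam_ne hst (conicParam_ne_zero hst) (conicParam_ne_zero hst')
    ((hmem _ hφ).trans (hmem _ hφ').symm)

end StandardConic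

/-- **Unique tangent line through a point in characteristic 2.**
For the conic `C : x₀x₁ + x₂² = 0` over an algebraically closed field of characteristic `2`
and any point `q ≠ [0:0:1]` of `ℙ²(k)`, there is exactly one projective line `L` through `q`
meeting `C` in exactly one point (namely, the line through `q` and `[0:0:1]`). -/
theorem conic_char_two_unique_tangent_through_point {k : Type*} [Field k] [IsAlgClosed k]
    [CharP k 2]
    (C : Set (Projectivization k (Fin 3 → k)))
    (hC : C = {P | P.rep 0 * P.rep 1 + P.rep 2 ^ 2 = 0})
    (q : Projectivization k (Fin 3 → k))
    (hq : q ≠ Projectivization.mk k ![0, 0, 1] (by intro h; exact one_ne_zero (congrFun h 2))) :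
    ∃! L : Set (Projectivization k (Fin 3 → k)),
      (∃ φ : (Fin 3 → k) →ₗ[k] k, φ ≠ 0 ∧ L = {P | φ P.rep = 0}) ∧
      q ∈ L ∧ (L ∩ C).ncard = 1 := by
  obtain rfl : C = standardConic k := hC
  obtain ⟨φ, hφ, hφq, hφN⟩ := exists_ne_zero_apply_eq_zero_of_two_lt_finrank
    (by rw [finrank_fin_fun]; norm_num) q.rep (![0, 0, 1] : Fin 3 → k)
  refine ⟨{P | φ P.rep = 0}, ⟨⟨φ, hφ, rfl⟩, hφq, ?_⟩, ?_⟩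
  · obtain ⟨P, hP⟩ := exists_inter_standardConic_eq_singleton hφ hφN
    rw [hP, Set.ncard_singleton]
  · rintro L ⟨⟨ψ, hψ, rfl⟩, hψq, hcard⟩
    have hψN := apply_eq_zero_of_ncard_inter_standardConic_eq_one hcard
    exact setOf_apply_rep_eq_zero_eq_of_ne (finrank_fin_fun k) hψ hφ hq hψq
      ((apply_rep_mk_eq_zero_iff_s14 ψ _).2 hψN) hφq ((apply_rep_mk_eq_zero_iff_s14 φ _).2 hφN)
end
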